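/- arXiv:2605.11667 — 4 statements merged into one kernel-verified Lean document; each statement's English description precedes it below -/
import Mathlib

section
/- For every positive integer d, every bridgeless graph G with diameter d(G)=d has oriented diameter at most 2d^2+2d. -/
/-- A finite loopless multigraph on vertex type `V` with edge type `E`:
each edge has an unordered pair of distinct endpoints. -/
structure Multigraph (V : Type) (E : Type) where
  ends : E → Sym2 V
  loopless : ∀ e, ¬ (ends e).IsDiag

namespace Multigraph

variable {V E : Type}

/-- `ReachIn R n u v` : there is a walk of length `n` from `u` to `v`
along the relation `R`. -/
def ReachIn (R : V → V → Prop) : ℕ → V → V → Prop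
  | 0, u, v => u = v
  | n + 1, u, v => ∃ w, R u w ∧ ReachIn R n w v

/-- The distance associated to a relation: the least length of a walk
(with junk value, via `sInf` of the empty set, if there is none). -/
noncomputable def rdist (R : V → V → Prop) (u v : V) : ℕ :=
  sInf {n | ReachIn R n u v}

/-- Adjacency in the multigraph. -/
def Adj (G : Multigraph V E) (u v : V) : Prop := ∃ e, G.ends e = s(u, v)

/-- Adjacency using edges different from a given edge `e₀`. -/
def AdjOff (G : Multigraph V E) (e₀ : E) (u v : V) : Prop :=
  ∃ e, e ≠ e₀ ∧ G.ends e = s(u, v)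

/-- Graph distance. -/
noncomputable def dist (G : Multigraph V E) (u v : V) : ℕ := rdist G.Adj u v

/-- `G` is connected. -/
def Connected (G : Multigraph V E) : Prop := ∀ u v, ∃ n, ReachIn G.Adj n u v

/-- `G` is bridgeless: connected, and deleting any single edge keeps it
connected (i.e. no edge is a bridge). -/
def Bridgeless (G : Multigraph V E) : Prop :=
  G.Connected ∧ ∀ e u v, ∃ n, ReachIn (G.AdjOff e) n u v

/-- The diameter of `G` equals `d`. -/
def diamIs (G : Multigraph V E) (d : ℕ) : Prop :=
  G.Connected ∧ (∀ u v, G.dist u v ≤ d) ∧ ∃ u v, G.dist u v = d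

/-- `l_G(e)`, the length of a shortest cycle through the edge `e`: one more
than the least length of a walk between the two endpoints of `e` avoiding
`e` itself. -/
noncomputable def cycLen (G : Multigraph V E) (e : E) : ℕ :=
  sInf {n | ∃ a b, G.ends e = s(a, b) ∧ ReachIn (G.AdjOff e) n a b} + 1

/-- The edge girth `g*(G)`: the maximum over edges `e` of the length of a
shortest cycle through `e`. -/
noncomputable def edgeGirth (G : Multigraph V E) : ℕ :=
  sSup (Set.range G.cycLen)

/-- An orientation of `G`: a choice of direction for each edge. -/
structure Orientation (G : Multigraph V E) where
  dir : E → V × V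
  compat : ∀ e, s((dir e).1, (dir e).2) = G.ends e

/-- The arc relation of an orientation. -/
def Orientation.DAdj {G : Multigraph V E} (O : G.Orientation) (u v : V) : Prop :=
  ∃ e, O.dir e = (u, v)

/-- An orientation is strong if any vertex can reach any other by a directed
walk. -/
def Orientation.Strong {G : Multigraph V E} (O : G.Orientation) : Prop :=
  ∀ u v, ∃ n, ReachIn O.DAdj n u v

/-- Directed distance in an orientation. -/
noncomputable def Orientation.ddist {G : Multigraph V E} (O : G.Orientation)
    (u v : V) : ℕ :=
  rdist O.DAdj u v

/-- The oriented diameter of `G` is at most `k`: there is a strong orientation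
all of whose directed distances are at most `k`. -/
def orientedDiamLE (G : Multigraph V E) (k : ℕ) : Prop :=
  ∃ O : G.Orientation, O.Strong ∧ ∀ u v, O.ddist u v ≤ k

end Multigraph
namespace Multigraph

namespace CT

open Multigraph

variable {V E : Type}

/-! ### Walk basics -/

namespace Walk

variable {R : V → V → Prop}

theorem single {u v : V} (h : R u v) : ReachIn R 1 u v := ⟨v, h, rfl⟩

theorem append : ∀ {m n : ℕ} {u v w : V}, ReachIn R m u v → ReachIn R n v w →
    ReachIn R (m + n) u w := by
  intro m
  induction m with
  | zero => intro n u v w h1 h2; cases h1; simpa using h2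
  | succ k ih =>
    intro n u v w h1 h2
    obtain ⟨z, hz, h1'⟩ := h1
    have he : (k+1)+n = (k+n)+1 := by omega
    rw [he]
    exact ⟨z, hz, ih h1' h2⟩

theorem snoc : ∀ {n : ℕ} {u v : V}, ReachIn R (n + 1) u v →
    ∃ w, ReachIn R n u w ∧ R w v := by
  intro n
  induction n with
  | zero =>
    intro u v h
    obtain ⟨w, hw, h'⟩ := h
    cases h'
    exact ⟨u, rfl, hw⟩
  | succ k ih =>
    intro u v h
    obtain ⟨w, hw, h'⟩ := h
    obtain ⟨z, hz1, hz2⟩ := ih h'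
    exact ⟨z, ⟨w, hw, hz1⟩, hz2⟩

theorem of_snoc : ∀ {n : ℕ} {u w v : V}, ReachIn R n u w → R w v → ReachIn R (n + 1) u v := by
  intro n u w v h1 h2
  exact append h1 (single h2)

theorem mono {R' : V → V → Prop} (hR : ∀ a b, R a b → R' a b) :
    ∀ {n : ℕ} {u v : V}, ReachIn R n u v → ReachIn R' n u v := by
  intro n
  induction n with
  | zero => intro u v h; exact h
  | succ k ih => intro u v h; obtain ⟨w, hw, h'⟩ := h; exact ⟨w, hR _ _ hw, ih h'⟩

theorem symm (hR : Symmetric R) : ∀ {n : ℕ} {u v : V}, ReachIn R n u v → ReachIn R n v u := by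
  intro n
  induction n with
  | zero => intro u v h; exact h.symm
  | succ k ih =>
    intro u v h
    obtain ⟨w, hw, h'⟩ := h
    simpa using append (ih h') (single (hR hw))

end Walk

theorem adj_symm (G : Multigraph V E) : Symmetric G.Adj := by
  rintro a b ⟨e, he⟩
  exact ⟨e, by rw [he, Sym2.eq_swap]⟩

theorem rdist_le {R : V → V → Prop} {n : ℕ} {u v : V} (h : ReachIn R n u v) :
    rdist R u v ≤ n := Nat.sInf_le h

/-! ### Contracted distance to a set -/

variable (G : Multigraph V E) (S : Set V)

/-- Distance from `x` to the set `S`. -/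
noncomputable def cdist (x : V) : ℕ := sInf {n | ∃ s ∈ S, ReachIn G.Adj n x s}

/-- Hypothesis: every vertex is within distance `R` of `S`. -/
def CD (R : ℕ) : Prop := ∀ x, ∃ n ≤ R, ∃ s ∈ S, ReachIn G.Adj n x s

variable {G S}

theorem cdist_set_nonempty {R : ℕ} (hS : CD G S R) (x : V) :
    {n | ∃ s ∈ S, ReachIn G.Adj n x s}.Nonempty := by
  obtain ⟨n, _, hn⟩ := hS x
  exact ⟨n, hn⟩

theorem cdist_spec {R : ℕ} (hS : CD G S R) (x : V) :
    ∃ s ∈ S, ReachIn G.Adj (cdist G S x) x s :=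
  Nat.sInf_mem (cdist_set_nonempty hS x)

theorem cdist_le {n : ℕ} {x : V} (h : ∃ s ∈ S, ReachIn G.Adj n x s) :
    cdist G S x ≤ n := Nat.sInf_le h

theorem cdist_le_R {R : ℕ} (hS : CD G S R) (x : V) : cdist G S x ≤ R := by
  obtain ⟨n, hn, h⟩ := hS x
  exact le_trans (cdist_le h) hn

theorem cdist_eq_zero_iff {R : ℕ} (hS : CD G S R) {x : V} :
    cdist G S x = 0 ↔ x ∈ S := by
  constructor
  · intro h
    obtain ⟨s, hs, hr⟩ := cdist_spec hS x
    rw [h] at hr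
    cases hr
    exact hs
  · intro h
    exact Nat.le_zero.mp (cdist_le ⟨x, h, rfl⟩)

theorem cdist_pos {R : ℕ} (hS : CD G S R) {x : V} (hx : x ∉ S) :
    1 ≤ cdist G S x := by
  rcases Nat.eq_zero_or_pos (cdist G S x) with h | h
  · exact absurd ((cdist_eq_zero_iff hS).mp h) hx
  · exact h

end CT

end Multigraph
namespace Multigraph

namespace CT

variable {V E : Type}

attribute [local instance] Classical.propDecidable

/-- Parent data: a vertex one step closer to `S` together with a witnessing edge. -/
noncomputable def pdata (G : Multigraph V E) (S : Set V) [Nonempty V] [Nonempty E] (x : V) :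
    V × E :=
  if h : ∃ p : V × E, G.ends p.2 = s(p.1, x) ∧ cdist G S p.1 + 1 = cdist G S x then
    h.choose
  else Classical.arbitrary _

noncomputable def par (G : Multigraph V E) (S : Set V) [Nonempty V] [Nonempty E] (x : V) : V :=
  (pdata G S x).1

noncomputable def pedge (G : Multigraph V E) (S : Set V) [Nonempty V] [Nonempty E] (x : V) : E :=
  (pdata G S x).2

section Tree

variable {G : Multigraph V E} {S : Set V} [Nonempty V] [Nonempty E] {R : ℕ}

theorem pdata_spec (hS : CD G S R) {x : V} (hx : x ∉ S) :
    G.ends (pedge G S x) = s(par G S x, x) ∧ cdist G S (par G S x) + 1 = cdist G S x := by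
  have hex : ∃ p : V × E, G.ends p.2 = s(p.1, x) ∧ cdist G S p.1 + 1 = cdist G S x := by
    obtain ⟨s, hs, hr⟩ := cdist_spec hS x
    have h1 : 1 ≤ cdist G S x := cdist_pos hS hx
    obtain ⟨m, hm⟩ : ∃ m, cdist G S x = m + 1 := ⟨cdist G S x - 1, by omega⟩
    rw [hm] at hr
    obtain ⟨w, hw, hr'⟩ := hr
    obtain ⟨e, he⟩ := hw
    have hwm : cdist G S w ≤ m := cdist_le ⟨s, hs, hr'⟩
    have hxm : cdist G S x ≤ cdist G S w + 1 := by
      obtain ⟨s', hs', hr''⟩ := cdist_spec hS w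
      have hwalk : ReachIn G.Adj (1 + cdist G S w) x s' := Walk.append (Walk.single ⟨e, he⟩) hr''
      have := cdist_le ⟨s', hs', hwalk⟩
      omega
    refine ⟨(w, e), ?_, by simp only; omega⟩
    simp only
    rw [he, Sym2.eq_swap]
  unfold par pedge pdata
  rw [dif_pos hex]
  exact hex.choose_spec

theorem cdist_par (hS : CD G S R) {x : V} (hx : x ∉ S) :
    cdist G S (par G S x) + 1 = cdist G S x := (pdata_spec hS hx).2

theorem pedge_ends (hS : CD G S R) {x : V} (hx : x ∉ S) :
    G.ends (pedge G S x) = s(par G S x, x) := (pdata_spec hS hx).1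

end Tree

/-- Iterated parent. -/
noncomputable def anc (G : Multigraph V E) (S : Set V) [Nonempty V] [Nonempty E]
    (j : ℕ) (x : V) : V := (par G S)^[j] x

/-- The branch (depth-1 ancestor) of a vertex not in `S`. -/
noncomputable def br (G : Multigraph V E) (S : Set V) [Nonempty V] [Nonempty E] (x : V) : V :=
  anc G S (cdist G S x - 1) x

/-- `IsBr c`: `c` is a depth-one vertex, i.e. a branch root. -/
def IsBr (G : Multigraph V E) (S : Set V) (c : V) : Prop := c ∉ S ∧ cdist G S c = 1

/-- Weak ancestor relation: `z` is an ancestor of `w` (still outside `S`). -/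
def Anc (G : Multigraph V E) (S : Set V) [Nonempty V] [Nonempty E] (z w : V) : Prop :=
  ∃ j, j < cdist G S w ∧ anc G S j w = z

section Tree2

variable {G : Multigraph V E} {S : Set V} [Nonempty V] [Nonempty E] {R : ℕ}

theorem anc_zero (x : V) : anc G S 0 x = x := rfl

theorem anc_succ (j : ℕ) (x : V) : anc G S (j+1) x = anc G S j (par G S x) :=
  Function.iterate_succ_apply _ _ _

theorem anc_succ' (j : ℕ) (x : V) : anc G S (j+1) x = par G S (anc G S j x) :=
  Function.iterate_succ_apply' _ _ _

theorem anc_add (i j : ℕ) (x : V) : anc G S (i + j) x = anc G S i (anc G S j x) := by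
  unfold anc
  rw [Function.iterate_add_apply]

theorem cdist_anc (hS : CD G S R) :
    ∀ (j : ℕ) (x : V), j ≤ cdist G S x → cdist G S (anc G S j x) + j = cdist G S x := by
  intro j
  induction j with
  | zero => intro x _; simp [anc_zero]
  | succ k ih =>
    intro x hj
    have hx : x ∉ S := by
      intro hmem
      have : cdist G S x = 0 := Nat.le_zero.mp (cdist_le ⟨x, hmem, rfl⟩)
      omega
    have hp := cdist_par hS hx
    have hk : k ≤ cdist G S (par G S x) := by omega
    have := ih (par G S x) hk
    rw [anc_succ]
    omega

theorem anc_not_mem (hS : CD G S R) {j : ℕ} {x : V} (hj : j < cdist G S x) :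
    anc G S j x ∉ S := by
  intro hmem
  have h1 := cdist_anc hS j x (by omega)
  have h0 : cdist G S (anc G S j x) = 0 := Nat.le_zero.mp (cdist_le ⟨_, hmem, rfl⟩)
  omega

theorem cdist_br (hS : CD G S R) {x : V} (hx : x ∉ S) :
    cdist G S (br G S x) = 1 := by
  have h1 : 1 ≤ cdist G S x := cdist_pos hS hx
  have h2 := cdist_anc hS (cdist G S x - 1) x (by omega)
  unfold br
  omega

theorem br_not_mem (hS : CD G S R) {x : V} (hx : x ∉ S) :
    br G S x ∉ S := by
  have h1 : 1 ≤ cdist G S x := cdist_pos hS hx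
  exact anc_not_mem hS (by omega)

theorem br_of_cdist_one {x : V} (hx : cdist G S x = 1) : br G S x = x := by
  unfold br
  rw [hx]
  rfl

theorem br_anc (hS : CD G S R) {j : ℕ} {x : V} (hj : j < cdist G S x) :
    br G S (anc G S j x) = br G S x := by
  unfold br
  have hc := cdist_anc hS j x (by omega)
  have he : cdist G S x - 1 = (cdist G S (anc G S j x) - 1) + j := by omega
  rw [he, anc_add]

theorem isBr_br (hS : CD G S R) {x : V} (hx : x ∉ S) : IsBr G S (br G S x) :=
  ⟨br_not_mem hS hx, cdist_br hS hx⟩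

theorem br_eq_self_of_isBr {c : V} (h : IsBr G S c) : br G S c = c :=
  br_of_cdist_one h.2

theorem Anc.refl' (hS : CD G S R) {w : V} (hw : w ∉ S) : Anc G S w w :=
  ⟨0, cdist_pos hS hw, rfl⟩

theorem Anc.not_mem' (hS : CD G S R) {z w : V} (h : Anc G S z w) : z ∉ S := by
  obtain ⟨j, hj, rfl⟩ := h
  exact anc_not_mem hS hj

theorem Anc.br_eq (hS : CD G S R) {z w : V} (h : Anc G S z w) :
    br G S z = br G S w := by
  obtain ⟨j, hj, rfl⟩ := h
  exact br_anc hS hj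

theorem Anc.anc_of (hS : CD G S R) {z w : V} (h : Anc G S z w) {j : ℕ}
    (hj : j < cdist G S z) : Anc G S (anc G S j z) w := by
  obtain ⟨i, hi, rfl⟩ := h
  have hc := cdist_anc hS i w (by omega)
  exact ⟨j + i, by omega, by rw [anc_add]⟩

theorem br_is_anc (hS : CD G S R) {x : V} (hx : x ∉ S) : Anc G S (br G S x) x :=
  ⟨cdist G S x - 1, by have := cdist_pos hS hx; omega, rfl⟩

/-- Edges incident to `S` land on depth-one vertices. -/
theorem cdist_eq_one_of_adj_S (hS : CD G S R) {a s₀ : V} (ha : a ∉ S) (hs : s₀ ∈ S)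
    (hadj : G.Adj a s₀) : cdist G S a = 1 := by
  have h1 : cdist G S a ≤ 1 := cdist_le ⟨s₀, hs, by simpa using Walk.single hadj⟩
  have h2 := cdist_pos hS ha
  omega

theorem eq_br_of_adj_S (hS : CD G S R) {a s₀ : V} (ha : a ∉ S) (hs : s₀ ∈ S)
    (hadj : G.Adj a s₀) : br G S a = a :=
  br_of_cdist_one (cdist_eq_one_of_adj_S hS ha hs hadj)

end Tree2

end CT

end Multigraph
namespace Multigraph

namespace CT

set_option linter.unusedSectionVars false

variable {V E : Type}

attribute [local instance] Classical.propDecidable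

/-! ### The branch-adjacency graph and its 2-colouring -/

/-- A "β-edge" at branch `c`: an extra edge from `c` into `S`. -/
def BEdge (G : Multigraph V E) (S : Set V) [Nonempty V] [Nonempty E] (c : V) : Prop :=
  ∃ f s₀, s₀ ∈ S ∧ G.ends f = s(c, s₀) ∧ f ≠ pedge G S c

/-- Adjacency between branches (`some c`) and the blob symbol (`none`). -/
def XA (G : Multigraph V E) (S : Set V) [Nonempty V] [Nonempty E] :
    Option V → Option V → Prop
  | some c, some c' => c ≠ c' ∧ IsBr G S c ∧ IsBr G S c' ∧
      ∃ f a b, G.ends f = s(a, b) ∧ a ∉ S ∧ b ∉ S ∧ br G S a = c ∧ br G S b = c'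
  | none, some c => IsBr G S c ∧ BEdge G S c
  | some c, none => IsBr G S c ∧ BEdge G S c
  | none, none => False

section Color

variable {G : Multigraph V E} {S : Set V} [Nonempty V] [Nonempty E] {R : ℕ}

theorem XA_symm : Symmetric (XA G S) := by
  rintro (_ | c) (_ | c') h
  · exact h.elim
  · exact h
  · exact h
  · obtain ⟨hne, h1, h2, f, a, b, hf, ha, hb, hba, hbb⟩ := h
    exact ⟨hne.symm, h2, h1, f, b, a, by rw [hf, Sym2.eq_swap], hb, ha, hbb, hba⟩

end Color

/-- Connectivity in the branch graph. -/
def XC (G : Multigraph V E) (S : Set V) [Nonempty V] [Nonempty E] (x y : Option V) : Prop :=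
  ∃ n, ReachIn (XA G S) n x y

section Color2

variable {G : Multigraph V E} {S : Set V} [Nonempty V] [Nonempty E] {R : ℕ}

theorem XC.refl (x : Option V) : XC G S x x := ⟨0, rfl⟩

theorem XC.symm {x y : Option V} (h : XC G S x y) : XC G S y x := by
  obtain ⟨n, hn⟩ := h
  exact ⟨n, Walk.symm XA_symm hn⟩

theorem XC.trans {x y z : Option V} (h1 : XC G S x y) (h2 : XC G S y z) : XC G S x z := by
  obtain ⟨n, hn⟩ := h1
  obtain ⟨m, hm⟩ := h2
  exact ⟨n + m, Walk.append hn hm⟩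

theorem XC.single {x y : Option V} (h : XA G S x y) : XC G S x y := ⟨1, Walk.single h⟩

end Color2

/-- Canonical root of the `XA`-component of `x` (preferring `none`). -/
noncomputable def rootOf (G : Multigraph V E) (S : Set V) [Nonempty V] [Nonempty E]
    (x : Option V) : Option V :=
  if XC G S x none then none
  else Set.Nonempty.some (s := {y | XC G S x y}) ⟨x, XC.refl x⟩

/-- Distance from the component root. -/
noncomputable def xdist (G : Multigraph V E) (S : Set V) [Nonempty V] [Nonempty E]
    (x : Option V) : ℕ :=
  sInf {n | ReachIn (XA G S) n (rootOf G S x) x}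

/-- The colour of a node in the branch graph. -/
def col (G : Multigraph V E) (S : Set V) [Nonempty V] [Nonempty E] (x : Option V) : Prop :=
  Odd (xdist G S x)

section Color3

variable {G : Multigraph V E} {S : Set V} [Nonempty V] [Nonempty E] {R : ℕ}

private theorem choose_congr {α : Type} {A B : Set α} (h : A = B) (hA : A.Nonempty)
    (hB : B.Nonempty) : hA.some = hB.some := by
  subst h
  rfl

theorem xconn_root (x : Option V) : XC G S x (rootOf G S x) := by
  unfold rootOf
  split_ifs with h
  · exact h
  · exact Set.Nonempty.some_mem (s := {y | XC G S x y}) ⟨x, XC.refl x⟩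

theorem rootOf_eq {x y : Option V} (h : XC G S x y) : rootOf G S x = rootOf G S y := by
  unfold rootOf
  by_cases hx : XC G S x none
  · rw [if_pos hx, if_pos (h.symm.trans hx)]
  · have hy : ¬ XC G S y none := fun hy => hx (h.trans hy)
    rw [if_neg hx, if_neg hy]
    exact choose_congr (A := {z | XC G S x z}) (B := {z | XC G S y z})
      (Set.ext fun z => ⟨fun hz => h.symm.trans hz, fun hz => h.trans hz⟩)
      ⟨x, XC.refl x⟩ ⟨y, XC.refl y⟩

theorem xdist_set_nonempty (x : Option V) :
    {n | ReachIn (XA G S) n (rootOf G S x) x}.Nonempty := by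
  obtain ⟨n, hn⟩ := XC.symm (G := G) (S := S) (xconn_root x)
  exact ⟨n, hn⟩

theorem xdist_spec (x : Option V) :
    ReachIn (XA G S) (xdist G S x) (rootOf G S x) x :=
  Nat.sInf_mem (xdist_set_nonempty x)

theorem xdist_le {n : ℕ} {x : Option V} (h : ReachIn (XA G S) n (rootOf G S x) x) :
    xdist G S x ≤ n := Nat.sInf_le h

theorem rootOf_none : rootOf G S (none : Option V) = none := by
  unfold rootOf
  rw [if_pos (XC.refl none)]

theorem col_none : ¬ col G S (none : Option V) := by
  have h0 : xdist G S (none : Option V) = 0 := by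
    have : (0 : ℕ) ∈ {n | ReachIn (XA G S) n (rootOf G S (none : Option V)) none} := by
      rw [rootOf_none]
      rfl
    exact Nat.le_zero.mp (Nat.sInf_le this)
  unfold col
  rw [h0]
  simp

/-- The key property of the colouring: every branch has an oppositely
coloured neighbour. -/
theorem opp {c : V} (hnbr : ∃ z, XA G S (some c) z) :
    ∃ z, XA G S (some c) z ∧ (col G S z ↔ ¬ col G S (some c)) := by
  rcases Nat.eq_zero_or_pos (xdist G S (some c)) with hk | hk
  · -- the branch is its own root
    have hroot : rootOf G S (some c) = some c := by
      have := xdist_spec (G := G) (S := S) (some c)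
      rw [hk] at this
      exact this
    obtain ⟨z, hz⟩ := hnbr
    have hrz : rootOf G S z = some c := by
      rw [rootOf_eq ((XC.single hz).symm), hroot]
    have hzne : z ≠ some c := by
      intro h
      subst h
      exact hz.1 rfl
    have hle : xdist G S z ≤ 1 := xdist_le (by rw [hrz]; exact Walk.single hz)
    have hne0 : xdist G S z ≠ 0 := by
      intro h0
      have := xdist_spec (G := G) (S := S) z
      rw [h0, hrz] at this
      exact hzne this.symm
    have h1 : xdist G S z = 1 := by omega
    refine ⟨z, hz, ?_⟩
    unfold col
    rw [h1, hk]
    simp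
  · -- positive distance: use the previous vertex on a geodesic
    obtain ⟨m, hm⟩ : ∃ m, xdist G S (some c) = m + 1 := ⟨xdist G S (some c) - 1, by omega⟩
    have hwalk := xdist_spec (G := G) (S := S) (some c)
    rw [hm] at hwalk
    obtain ⟨z, hz1, hz2⟩ := Walk.snoc hwalk
    have hrz : rootOf G S z = rootOf G S (some c) := rootOf_eq (XC.single hz2)
    have hle : xdist G S z ≤ m := xdist_le (by rw [hrz]; exact hz1)
    have hge : m ≤ xdist G S z := by
      have : ReachIn (XA G S) (xdist G S z + 1) (rootOf G S (some c)) (some c) := by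
        rw [← hrz]
        exact Walk.of_snoc (xdist_spec z) hz2
      have := xdist_le this
      omega
    have heq : xdist G S z = m := le_antisymm hle hge
    refine ⟨z, XA_symm hz2, ?_⟩
    unfold col
    rw [heq, hm]
    simp [Nat.odd_add_one]

end Color3

end CT

end Multigraph
namespace Multigraph

namespace CT

set_option linter.unusedSectionVars false

variable {V E : Type}

attribute [local instance] Classical.propDecidable

section Exit

variable {G : Multigraph V E} {S : Set V} [Nonempty V] [Nonempty E] {R : ℕ}

/-- Along a walk from inside `P` to outside `P` there is an exiting step. -/
theorem exists_exit {R' : V → V → Prop} {P : V → Prop} :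
    ∀ {n : ℕ} {u v : V}, ReachIn R' n u v → P u → ¬ P v →
      ∃ a b, P a ∧ ¬ P b ∧ R' a b := by
  intro n
  induction n with
  | zero => intro u v h hu hv; cases h; exact absurd hu hv
  | succ k ih =>
    intro u v h hu hv
    obtain ⟨w, hw, h'⟩ := h
    by_cases hPw : P w
    · exact ih h' hPw hv
    · exact ⟨u, w, hu, hPw, hw⟩

theorem cdist_ge_two (hS : CD G S R) {x : V} (hx : x ∉ S) (hp : par G S x ∉ S) :
    2 ≤ cdist G S x := by
  have h1 := cdist_par hS hx
  have h2 := cdist_pos hS hp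
  omega

theorem br_par_eq (hS : CD G S R) {x : V} (hx : x ∉ S) (hp : par G S x ∉ S) :
    br G S (par G S x) = br G S x := by
  have h2 := cdist_ge_two hS hx hp
  have := br_anc hS (j := 1) (x := x) (by omega)
  rw [← this]
  congr 1

theorem pedge_inj (hS : CD G S R) {x x' : V} (hx : x ∉ S) (hx' : x' ∉ S)
    (h : pedge G S x = pedge G S x') : x = x' := by
  have h1 := pedge_ends hS hx
  have h2 := pedge_ends hS hx'
  rw [h, h2] at h1
  rcases (Sym2.eq_iff).mp h1 with ⟨h3, h4⟩ | ⟨h3, h4⟩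
  · exact h4.symm
  · -- par x' = x and x' = par x: contradiction on distances
    exfalso
    have c1 := cdist_par hS hx
    have c2 := cdist_par hS hx'
    rw [h3] at c2
    have c3 : cdist G S x' = cdist G S (par G S x) := congrArg (cdist G S) h4
    omega

/-- Every branch has a neighbour in the branch graph. -/
theorem nbr_exists (hb : G.Bridgeless) (hS : CD G S R) {c : V} (hc : IsBr G S c) :
    ∃ z, XA G S (some c) z := by
  obtain ⟨n, hwalk⟩ := hb.2 (pedge G S c) c (par G S c)
  have hparS : par G S c ∈ S := by
    have h1 := cdist_par hS hc.1
    rw [hc.2] at h1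
    exact (cdist_eq_zero_iff hS).mp (by omega)
  have hPc : c ∉ S ∧ br G S c = c := ⟨hc.1, br_eq_self_of_isBr hc⟩
  have hPv : ¬ (par G S c ∉ S ∧ br G S (par G S c) = c) := fun h => h.1 hparS
  obtain ⟨a, b, hPa, hPb, hadj⟩ :=
    exists_exit (P := fun x => x ∉ S ∧ br G S x = c) hwalk hPc hPv
  obtain ⟨f, hfne, hf⟩ := hadj
  by_cases hbS : b ∈ S
  · -- β-edge: a = c
    have h1 : cdist G S a = 1 := cdist_eq_one_of_adj_S hS hPa.1 hbS ⟨f, hf⟩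
    have hac : a = c := by rw [← hPa.2, br_of_cdist_one h1]
    exact ⟨none, hc, f, b, hbS, by rw [hf, hac], hfne⟩
  · -- cross edge to another branch
    have hbrb : IsBr G S (br G S b) := isBr_br hS hbS
    have hne : c ≠ br G S b := fun h => hPb ⟨hbS, h.symm⟩
    exact ⟨some (br G S b), hne, hc, hbrb, f, a, b, hf, hPa.1, hbS, hPa.2, rfl⟩

end Exit

/-- Specification of the picked cycle data for a branch `c`. -/
def PkSpec (G : Multigraph V E) (S : Set V) [Nonempty V] [Nonempty E]
    (c a b : V) (f : E) : Prop :=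
  a ∉ S ∧ col G S (some (br G S a)) ∧ G.ends f = s(a, b) ∧
    ((b ∈ S ∧ a = c ∧ f ≠ pedge G S a) ∨
     (b ∉ S ∧ ¬ col G S (some (br G S b)) ∧ (c = br G S a ∨ c = br G S b)))

section Pick

variable {G : Multigraph V E} {S : Set V} [Nonempty V] [Nonempty E] {R : ℕ}

theorem pick_exists (hb : G.Bridgeless) (hS : CD G S R) {c : V} (hc : IsBr G S c) :
    ∃ p : V × V × E, PkSpec G S c p.1 p.2.1 p.2.2 := by
  obtain ⟨z, hz, hcol⟩ := opp (nbr_exists hb hS hc)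
  have hbrc : br G S c = c := br_eq_self_of_isBr hc
  by_cases hcc : col G S (some c)
  · -- c is coloured `true`; z is coloured `false`
    have hzf : ¬ col G S z := fun h => (hcol.mp h) hcc
    cases z with
    | none =>
      obtain ⟨_, f, s₀, hs₀, hf, hfne⟩ := hz
      have hspec : PkSpec G S c c s₀ f :=
        ⟨hc.1, by rw [hbrc]; exact hcc, hf, Or.inl ⟨hs₀, rfl, hfne⟩⟩
      exact ⟨(c, s₀, f), hspec⟩
    | some c' =>
      obtain ⟨hne, _, hc', f, a, b, hf, ha, hbn, hba, hbb⟩ := hz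
      have hspec : PkSpec G S c a b f :=
        ⟨ha, by rw [hba]; exact hcc, hf, Or.inr ⟨hbn, by rw [hbb]; exact hzf, Or.inl hba.symm⟩⟩
      exact ⟨(a, b, f), hspec⟩
  · -- c is coloured `false`; z is coloured `true`
    have hzt : col G S z := hcol.mpr hcc
    cases z with
    | none => exact absurd hzt col_none
    | some c' =>
      obtain ⟨hne, _, hc', f, a, b, hf, ha, hbn, hba, hbb⟩ := hz
      have hspec : PkSpec G S c b a f :=
        ⟨hbn, by rw [hbb]; exact hzt, by rw [hf, Sym2.eq_swap],
          Or.inr ⟨ha, by rw [hba]; exact hcc, Or.inr hba.symm⟩⟩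
      exact ⟨(b, a, f), hspec⟩

end Pick

/-- The picked data. -/
noncomputable def pk (G : Multigraph V E) (S : Set V) [Nonempty V] [Nonempty E] (c : V) :
    V × V × E :=
  if h : ∃ p : V × V × E, PkSpec G S c p.1 p.2.1 p.2.2 then h.choose
  else Classical.arbitrary _

noncomputable def pkA (G : Multigraph V E) (S : Set V) [Nonempty V] [Nonempty E] (c : V) : V :=
  (pk G S c).1

noncomputable def pkB (G : Multigraph V E) (S : Set V) [Nonempty V] [Nonempty E] (c : V) : V :=
  (pk G S c).2.1

noncomputable def pkE (G : Multigraph V E) (S : Set V) [Nonempty V] [Nonempty E] (c : V) : E :=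
  (pk G S c).2.2

section Pick2

variable {G : Multigraph V E} {S : Set V} [Nonempty V] [Nonempty E] {R : ℕ}

theorem pk_spec (hb : G.Bridgeless) (hS : CD G S R) {c : V} (hc : IsBr G S c) :
    PkSpec G S c (pkA G S c) (pkB G S c) (pkE G S c) := by
  unfold pkA pkB pkE pk
  rw [dif_pos (pick_exists hb hS hc)]
  exact (pick_exists hb hS hc).choose_spec

end Pick2

/-- Requirement on chosen cross/β edges. -/
def Req (G : Multigraph V E) (S : Set V) [Nonempty V] [Nonempty E] (f : E) (a b : V) : Prop :=
  ∃ c, IsBr G S c ∧ pkA G S c = a ∧ pkB G S c = b ∧ pkE G S c = f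

/-- Vertices lying on one of the chosen cycles. -/
def OnCyc (G : Multigraph V E) (S : Set V) [Nonempty V] [Nonempty E] (x : V) : Prop :=
  ∃ c, IsBr G S c ∧
    (Anc G S x (pkA G S c) ∨ (pkB G S c ∉ S ∧ Anc G S x (pkB G S c)))

/-- Requirement on tree edges of cycle vertices. -/
def TReq (G : Multigraph V E) (S : Set V) [Nonempty V] [Nonempty E] (f : E) (a b : V) : Prop :=
  ∃ x, x ∉ S ∧ OnCyc G S x ∧ f = pedge G S x ∧
    ((col G S (some (br G S x)) ∧ a = par G S x ∧ b = x) ∨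
     (¬ col G S (some (br G S x)) ∧ a = x ∧ b = par G S x))

/-- All phase requirements. -/
def PhaseReq (G : Multigraph V E) (S : Set V) [Nonempty V] [Nonempty E] (f : E) (a b : V) :
    Prop := Req G S f a b ∨ TReq G S f a b

end CT

end Multigraph
namespace Multigraph

namespace CT

set_option linter.unusedSectionVars false

variable {V E : Type}

attribute [local instance] Classical.propDecidable

section Funct

variable {G : Multigraph V E} {S : Set V} [Nonempty V] [Nonempty E] {R : ℕ}

theorem req_spec (hb : G.Bridgeless) (hS : CD G S R) {f : E} {a b : V}
    (h : Req G S f a b) : ∃ c, IsBr G S c ∧ PkSpec G S c a b f := by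
  obtain ⟨c, hc, h1, h2, h3⟩ := h
  have := pk_spec hb hS hc
  rw [h1, h2, h3] at this
  exact ⟨c, hc, this⟩

theorem phaseReq_ends (hb : G.Bridgeless) (hS : CD G S R) {f : E} {a b : V}
    (h : PhaseReq G S f a b) : G.ends f = s(a, b) := by
  rcases h with h | h
  · obtain ⟨c, _, spec⟩ := req_spec hb hS h
    exact spec.2.2.1
  · obtain ⟨x, hx, _, hf, hdir⟩ := h
    rcases hdir with ⟨_, ha, hbb⟩ | ⟨_, ha, hbb⟩
    · rw [hf, ha, hbb]; exact pedge_ends hS hx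
    · rw [hf, ha, hbb, Sym2.eq_swap]; exact pedge_ends hS hx

theorem tReq_unique (hS : CD G S R) {f : E} {a b a' b' : V}
    (h1 : TReq G S f a b) (h2 : TReq G S f a' b') : a = a' ∧ b = b' := by
  obtain ⟨x, hx, _, hf, hdir⟩ := h1
  obtain ⟨x', hx', _, hf', hdir'⟩ := h2
  have hxx : x = x' := pedge_inj hS hx hx' (by rw [← hf, ← hf'])
  subst hxx
  rcases hdir with ⟨hc, ha, hbb⟩ | ⟨hc, ha, hbb⟩ <;>
    rcases hdir' with ⟨hc', ha', hbb'⟩ | ⟨hc', ha', hbb'⟩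
  · exact ⟨ha.trans ha'.symm, hbb.trans hbb'.symm⟩
  · exact absurd hc hc'
  · exact absurd hc' hc
  · exact ⟨ha.trans ha'.symm, hbb.trans hbb'.symm⟩

theorem req_tReq_disjoint (hb : G.Bridgeless) (hS : CD G S R) {f : E} {a b a' b' : V}
    (h1 : Req G S f a b) (h2 : TReq G S f a' b') : False := by
  obtain ⟨c, hc, spec⟩ := req_spec hb hS h1
  obtain ⟨x, hx, _, hf, _⟩ := h2
  have hends : s(a, b) = s(par G S x, x) := by
    rw [← spec.2.2.1, hf]
    exact pedge_ends hS hx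
  have haS : a ∉ S := spec.1
  have hcola : col G S (some (br G S a)) := spec.2.1
  rcases Sym2.eq_iff.mp hends with ⟨hA, hB⟩ | ⟨hA, hB⟩
  · -- a = par x, b = x
    rcases spec.2.2.2 with ⟨hbS, _, _⟩ | ⟨hbn, hncol, _⟩
    · rw [hB] at hbS; exact hx hbS
    · have hpx : par G S x ∉ S := by rw [← hA]; exact haS
      have hbr : br G S (par G S x) = br G S x := br_par_eq hS hx hpx
      rw [hA, hbr] at hcola
      rw [hB] at hncol
      exact hncol hcola
  · -- a = x, b = par x
    rcases spec.2.2.2 with ⟨hbS, hac, hfne⟩ | ⟨hbn, hncol, _⟩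
    · exact hfne (by rw [hf, hA])
    · have hpx : par G S x ∉ S := by rw [← hB]; exact hbn
      have hbr : br G S (par G S x) = br G S x := br_par_eq hS hx hpx
      rw [hB, hbr] at hncol
      rw [hA] at hcola
      exact hncol hcola

theorem req_unique (hb : G.Bridgeless) (hS : CD G S R) {f : E} {a b a' b' : V}
    (h1 : Req G S f a b) (h2 : Req G S f a' b') : a = a' ∧ b = b' := by
  obtain ⟨c, hc, spec⟩ := req_spec hb hS h1
  obtain ⟨c', hc', spec'⟩ := req_spec hb hS h2
  have hends : s(a, b) = s(a', b') := by rw [← spec.2.2.1, ← spec'.2.2.1]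
  rcases Sym2.eq_iff.mp hends with ⟨hA, hB⟩ | ⟨hA, hB⟩
  · exact ⟨hA, hB⟩
  · exfalso
    subst hA; subst hB
    rcases spec.2.2.2 with ⟨hbS, _, _⟩ | ⟨hbn, hncol, _⟩
    · exact spec'.1 hbS
    · exact hncol spec'.2.1

theorem phaseReq_funct (hb : G.Bridgeless) (hS : CD G S R) {f : E} {a b a' b' : V}
    (h1 : PhaseReq G S f a b) (h2 : PhaseReq G S f a' b') : a = a' ∧ b = b' := by
  rcases h1 with h1 | h1 <;> rcases h2 with h2 | h2
  · exact req_unique hb hS h1 h2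
  · exact absurd (req_tReq_disjoint hb hS h1 h2) (by simp)
  · exact absurd (req_tReq_disjoint hb hS h2 h1) (by simp)
  · exact tReq_unique hS h1 h2

end Funct

/-- The set of oriented-phase vertices: `S` together with the cycle vertices. -/
def Sc (G : Multigraph V E) (S : Set V) [Nonempty V] [Nonempty E] : Set V :=
  S ∪ {x | OnCyc G S x}

section Endpoints

variable {G : Multigraph V E} {S : Set V} [Nonempty V] [Nonempty E] {R : ℕ}

theorem subset_Sc : S ⊆ Sc G S := Set.subset_union_left

theorem onCyc_anc (hS : CD G S R) {x : V} (h : OnCyc G S x) {j : ℕ}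
    (hj : j < cdist G S x) : OnCyc G S (anc G S j x) := by
  obtain ⟨c, hc, hA | ⟨hbn, hB⟩⟩ := h
  · exact ⟨c, hc, Or.inl (hA.anc_of hS hj)⟩
  · exact ⟨c, hc, Or.inr ⟨hbn, hB.anc_of hS hj⟩⟩

theorem onCyc_par (hS : CD G S R) {x : V} (h : OnCyc G S x) (hx : x ∉ S)
    (hp : par G S x ∉ S) : OnCyc G S (par G S x) := by
  have h2 := cdist_ge_two hS hx hp
  have := onCyc_anc hS h (j := 1) (by omega)
  rwa [show anc G S 1 x = par G S x from rfl] at this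

theorem onCyc_not_mem (hS : CD G S R) {x : V} (h : OnCyc G S x) : x ∉ S := by
  obtain ⟨c, hc, hA | ⟨hbn, hB⟩⟩ := h
  · exact hA.not_mem' hS
  · exact hB.not_mem' hS

theorem phaseReq_endpoints (hb : G.Bridgeless) (hS : CD G S R) {f : E} {a b : V}
    (h : PhaseReq G S f a b) : a ∈ Sc G S ∧ b ∈ Sc G S := by
  rcases h with h | h
  · obtain ⟨c, hc, hA, hB, hE⟩ := h
    have spec := pk_spec hb hS hc
    constructor
    · refine Or.inr ⟨c, hc, Or.inl ?_⟩
      rw [hA]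
      exact Anc.refl' hS (hA ▸ spec.1)
    · rcases spec.2.2.2 with ⟨hbS, _, _⟩ | ⟨hbn, _, _⟩
      · exact Or.inl (hB ▸ hbS)
      · refine Or.inr ⟨c, hc, Or.inr ⟨hbn, ?_⟩⟩
        rw [hB]
        exact Anc.refl' hS (hB ▸ hbn)
  · obtain ⟨x, hx, hcyc, hf, hdir⟩ := h
    have hxSc : x ∈ Sc G S := Or.inr hcyc
    have hparSc : par G S x ∈ Sc G S := by
      by_cases hp : par G S x ∈ S
      · exact Or.inl hp
      · exact Or.inr (onCyc_par hS hcyc hx hp)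
    rcases hdir with ⟨_, ha, hbb⟩ | ⟨_, ha, hbb⟩
    · exact ⟨ha ▸ hparSc, hbb ▸ hxSc⟩
    · exact ⟨ha ▸ hxSc, hbb ▸ hparSc⟩

end Endpoints

/-- The phase orientation: override `O'` on the required edges. -/
noncomputable def orient {G : Multigraph V E} {S : Set V} [Nonempty V] [Nonempty E] {R : ℕ}
    (hb : G.Bridgeless) (hS : CD G S R) (O' : G.Orientation) : G.Orientation where
  dir e := if h : ∃ p : V × V, PhaseReq G S e p.1 p.2 then h.choose else O'.dir e
  compat e := by
    split_ifs with h
    · have := h.choose_spec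
      rw [phaseReq_ends hb hS this]
    · exact O'.compat e

section Orient

variable {G : Multigraph V E} {S : Set V} [Nonempty V] [Nonempty E] {R : ℕ}
variable {hb : G.Bridgeless} {hS : CD G S R} {O' : G.Orientation}

theorem orient_dir_req {f : E} {a b : V} (h : PhaseReq G S f a b) :
    (orient hb hS O').dir f = (a, b) := by
  unfold orient
  simp only
  rw [dif_pos ⟨(a, b), h⟩]
  have hspec := (⟨(a, b), h⟩ : ∃ p : V × V, PhaseReq G S f p.1 p.2).choose_spec
  obtain ⟨hA, hB⟩ := phaseReq_funct hb hS hspec h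
  ext <;> simp [hA, hB]

theorem orient_dAdj_req {f : E} {a b : V} (h : PhaseReq G S f a b) :
    (orient hb hS O').DAdj a b := ⟨f, orient_dir_req h⟩

theorem orient_dir_eq {f : E} (h : ∀ a b, ¬ PhaseReq G S f a b) :
    (orient hb hS O').dir f = O'.dir f := by
  unfold orient
  simp only
  rw [dif_neg]
  rintro ⟨p, hp⟩
  exact h p.1 p.2 hp

theorem orient_dAdj_outside {a b : V} (hab : a ∉ Sc G S ∨ b ∉ Sc G S)
    (h : O'.DAdj a b) : (orient hb hS O').DAdj a b := by
  obtain ⟨e, he⟩ := h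
  refine ⟨e, ?_⟩
  rw [orient_dir_eq (fun p q hpq => ?_), he]
  -- the endpoints of a required edge both lie in `Sc`
  have hends : G.ends e = s(p, q) := phaseReq_ends hb hS hpq
  have hends' : G.ends e = s(a, b) := by rw [← O'.compat e, he]
  have hmem := phaseReq_endpoints hb hS hpq
  rw [hends] at hends'
  rcases Sym2.eq_iff.mp hends' with ⟨hA, hB⟩ | ⟨hA, hB⟩
  · rcases hab with hna | hnb
    · exact hna (hA ▸ hmem.1)
    · exact hnb (hB ▸ hmem.2)
  · rcases hab with hna | hnb
    · exact hna (hB ▸ hmem.2)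
    · exact hnb (hA ▸ hmem.1)

end Orient

end CT

end Multigraph
namespace Multigraph

namespace CT

set_option linter.unusedSectionVars false

variable {V E : Type}

attribute [local instance] Classical.propDecidable

section Walks

variable {G : Multigraph V E} {S : Set V} [Nonempty V] [Nonempty E] {R : ℕ}
variable {O : G.Orientation}

/-- Hypothesis: the orientation satisfies all phase requirements. -/
def HO (G : Multigraph V E) (S : Set V) [Nonempty V] [Nonempty E] (O : G.Orientation) : Prop :=
  ∀ f a b, PhaseReq G S f a b → O.dir f = (a, b)

theorem tReq_down (hS : CD G S R) {x : V} (hx : x ∉ S)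
    (hcol : col G S (some (br G S x))) (hcyc : OnCyc G S x) :
    TReq G S (pedge G S x) (par G S x) x :=
  ⟨x, hx, hcyc, rfl, Or.inl ⟨hcol, rfl, rfl⟩⟩

theorem tReq_up (hS : CD G S R) {x : V} (hx : x ∉ S)
    (hcol : ¬ col G S (some (br G S x))) (hcyc : OnCyc G S x) :
    TReq G S (pedge G S x) x (par G S x) :=
  ⟨x, hx, hcyc, rfl, Or.inr ⟨hcol, rfl, rfl⟩⟩

/-- Walks down a `true`-coloured branch, from an ancestor to the vertex. -/
theorem walk_down (hS : CD G S R) (hO : HO G S O) {w : V} (hw : w ∉ S)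
    (hcol : col G S (some (br G S w))) (hcyc : OnCyc G S w) :
    ∀ j, j < cdist G S w → ReachIn O.DAdj j (anc G S j w) w := by
  intro j
  induction j with
  | zero => intro _; rfl
  | succ k ih =>
    intro hj
    set x' := anc G S k w with hx'
    have hx'S : x' ∉ S := anc_not_mem hS (by omega)
    have hbr : br G S x' = br G S w := br_anc hS (by omega)
    have hcyc' : OnCyc G S x' := onCyc_anc hS hcyc (by omega)
    have hreq : TReq G S (pedge G S x') (par G S x') x' :=
      tReq_down hS hx'S (by rw [hbr]; exact hcol) hcyc'
    have harc : O.DAdj (par G S x') x' := ⟨pedge G S x', hO _ _ _ (Or.inr hreq)⟩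
    have hpar : anc G S (k+1) w = par G S x' := anc_succ' k w
    rw [hpar]
    exact ⟨x', harc, ih (by omega)⟩

/-- Walks up a `false`-coloured branch, from the vertex to an ancestor. -/
theorem walk_up (hS : CD G S R) (hO : HO G S O) {w : V} (hw : w ∉ S)
    (hcol : ¬ col G S (some (br G S w))) (hcyc : OnCyc G S w) :
    ∀ j, j < cdist G S w → ReachIn O.DAdj j w (anc G S j w) := by
  intro j
  induction j with
  | zero => intro _; rfl
  | succ k ih =>
    intro hj
    set x' := anc G S k w with hx'
    have hx'S : x' ∉ S := anc_not_mem hS (by omega)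
    have hbr : br G S x' = br G S w := br_anc hS (by omega)
    have hcyc' : OnCyc G S x' := onCyc_anc hS hcyc (by omega)
    have hreq : TReq G S (pedge G S x') x' (par G S x') :=
      tReq_up hS hx'S (by rw [hbr]; exact hcol) hcyc'
    have harc : O.DAdj x' (par G S x') := ⟨pedge G S x', hO _ _ _ (Or.inr hreq)⟩
    have hpar : anc G S (k+1) w = par G S x' := anc_succ' k w
    rw [hpar]
    exact Walk.of_snoc (ih (by omega)) harc

theorem par_br_mem (hS : CD G S R) {w : V} (hw : w ∉ S) : par G S (br G S w) ∈ S := by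
  have h1 : cdist G S (br G S w) = 1 := cdist_br hS hw
  have h2 := cdist_par hS (br_not_mem hS hw)
  rw [h1] at h2
  exact (cdist_eq_zero_iff hS).mp (by omega)

/-- Full descent from `S` to a vertex in a `true`-coloured branch. -/
theorem walk_down_full (hS : CD G S R) (hO : HO G S O) {w : V} (hw : w ∉ S)
    (hcol : col G S (some (br G S w))) (hcyc : OnCyc G S w) :
    ∃ s ∈ S, ReachIn O.DAdj (cdist G S w) s w := by
  have h1 : 1 ≤ cdist G S w := cdist_pos hS hw
  have hwd := walk_down hS hO hw hcol hcyc (cdist G S w - 1) (by omega)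
  have hbrw : anc G S (cdist G S w - 1) w = br G S w := rfl
  rw [hbrw] at hwd
  have hbb : br G S (br G S w) = br G S w := br_eq_self_of_isBr (isBr_br hS hw)
  have hreq : TReq G S (pedge G S (br G S w)) (par G S (br G S w)) (br G S w) :=
    tReq_down hS (br_not_mem hS hw) (by rw [hbb]; exact hcol)
      (onCyc_anc hS hcyc (by omega))
  have harc : O.DAdj (par G S (br G S w)) (br G S w) :=
    ⟨pedge G S (br G S w), hO _ _ _ (Or.inr hreq)⟩
  refine ⟨par G S (br G S w), par_br_mem hS hw, ?_⟩
  have : ReachIn O.DAdj ((cdist G S w - 1) + 1) (par G S (br G S w)) w :=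
    ⟨br G S w, harc, hwd⟩
  have he : (cdist G S w - 1) + 1 = cdist G S w := by omega
  rwa [he] at this

/-- Full ascent from a vertex in a `false`-coloured branch to `S`. -/
theorem walk_up_full (hS : CD G S R) (hO : HO G S O) {w : V} (hw : w ∉ S)
    (hcol : ¬ col G S (some (br G S w))) (hcyc : OnCyc G S w) :
    ∃ s ∈ S, ReachIn O.DAdj (cdist G S w) w s := by
  have h1 : 1 ≤ cdist G S w := cdist_pos hS hw
  have hwd := walk_up hS hO hw hcol hcyc (cdist G S w - 1) (by omega)
  have hbrw : anc G S (cdist G S w - 1) w = br G S w := rfl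
  rw [hbrw] at hwd
  have hbb : br G S (br G S w) = br G S w := br_eq_self_of_isBr (isBr_br hS hw)
  have hreq : TReq G S (pedge G S (br G S w)) (br G S w) (par G S (br G S w)) :=
    tReq_up hS (br_not_mem hS hw) (by rw [hbb]; exact hcol)
      (onCyc_anc hS hcyc (by omega))
  have harc : O.DAdj (br G S w) (par G S (br G S w)) :=
    ⟨pedge G S (br G S w), hO _ _ _ (Or.inr hreq)⟩
  refine ⟨par G S (br G S w), par_br_mem hS hw, ?_⟩
  have : ReachIn O.DAdj ((cdist G S w - 1) + 1) w (par G S (br G S w)) :=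
    Walk.of_snoc hwd harc
  have he : (cdist G S w - 1) + 1 = cdist G S w := by omega
  rwa [he] at this

/-- The `B`-side of a pick, when outside `S`, is `false`-coloured. -/
theorem pkB_col (hb : G.Bridgeless) (hS : CD G S R) {c : V} (hc : IsBr G S c)
    (hbn : pkB G S c ∉ S) : ¬ col G S (some (br G S (pkB G S c))) := by
  have spec := pk_spec hb hS hc
  rcases spec.2.2.2 with ⟨hbS, _, _⟩ | ⟨_, hncol, _⟩
  · exact absurd hbS hbn
  · exact hncol

theorem onCyc_pkA (hb : G.Bridgeless) (hS : CD G S R) {c : V} (hc : IsBr G S c) :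
    OnCyc G S (pkA G S c) :=
  ⟨c, hc, Or.inl (Anc.refl' hS (pk_spec hb hS hc).1)⟩

theorem onCyc_pkB (hb : G.Bridgeless) (hS : CD G S R) {c : V} (hc : IsBr G S c)
    (hbn : pkB G S c ∉ S) : OnCyc G S (pkB G S c) :=
  ⟨c, hc, Or.inr ⟨hbn, Anc.refl' hS hbn⟩⟩

theorem arc_pk (hS : CD G S R) (hO : HO G S O) {c : V} (hc : IsBr G S c) :
    O.DAdj (pkA G S c) (pkB G S c) :=
  ⟨pkE G S c, hO _ _ _ (Or.inl ⟨c, hc, rfl, rfl, rfl⟩)⟩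

/-- The outward phase bound: every cycle vertex is reachable from `S` in at
most `2R` steps. -/
theorem phase_out (hb : G.Bridgeless) (hS : CD G S R) (hO : HO G S O) {x : V}
    (hx : OnCyc G S x) : ∃ n ≤ 2 * R, ∃ s ∈ S, ReachIn O.DAdj n s x := by
  obtain ⟨c, hc, hca | ⟨hbn, hcb⟩⟩ := hx
  · -- A-side
    have spec := pk_spec hb hS hc
    have hxS : x ∉ S := hca.not_mem' hS
    have hcol : col G S (some (br G S x)) := by
      rw [hca.br_eq hS]; exact spec.2.1
    obtain ⟨s, hs, hwalk⟩ := walk_down_full hS hO hxS hcol ⟨c, hc, Or.inl hca⟩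
    exact ⟨cdist G S x, by have := cdist_le_R hS x; omega, s, hs, hwalk⟩
  · -- B-side
    have spec := pk_spec hb hS hc
    obtain ⟨j, hj, hanc⟩ := hcb
    obtain ⟨s, hs, hw1⟩ := walk_down_full hS hO spec.1 spec.2.1 (onCyc_pkA hb hS hc)
    have harc := arc_pk hS hO hc
    have hw2 : ReachIn O.DAdj j (pkB G S c) (anc G S j (pkB G S c)) :=
      walk_up hS hO hbn (pkB_col hb hS hc hbn) (onCyc_pkB hb hS hc hbn) j hj
    rw [hanc] at hw2
    have hwalk : ReachIn O.DAdj (cdist G S (pkA G S c) + 1 + j) s x :=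
      Walk.append (Walk.append hw1 (Walk.single harc)) hw2
    refine ⟨_, ?_, s, hs, hwalk⟩
    have h1 := cdist_le_R hS (pkA G S c)
    have h2 := cdist_le_R hS (pkB G S c)
    omega

/-- The inward phase bound: from every cycle vertex, `S` is reachable in at
most `2R` steps. -/
theorem phase_in (hb : G.Bridgeless) (hS : CD G S R) (hO : HO G S O) {x : V}
    (hx : OnCyc G S x) : ∃ n ≤ 2 * R, ∃ s ∈ S, ReachIn O.DAdj n x s := by
  obtain ⟨c, hc, hca | ⟨hbn, hcb⟩⟩ := hx
  · -- A-side: descend to the pick, cross, then (if needed) ascend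
    have spec := pk_spec hb hS hc
    obtain ⟨j, hj, hanc⟩ := hca
    have hw1 : ReachIn O.DAdj j (anc G S j (pkA G S c)) (pkA G S c) :=
      walk_down hS hO spec.1 spec.2.1 (onCyc_pkA hb hS hc) j hj
    rw [hanc] at hw1
    have harc := arc_pk hS hO hc
    by_cases hbS : pkB G S c ∈ S
    · refine ⟨j + 1, ?_, pkB G S c, hbS, Walk.of_snoc hw1 harc⟩
      have h1 := cdist_le_R hS (pkA G S c)
      omega
    · obtain ⟨s, hs, hw2⟩ := walk_up_full hS hO hbS (pkB_col hb hS hc hbS)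
        (onCyc_pkB hb hS hc hbS)
      refine ⟨j + 1 + cdist G S (pkB G S c), ?_, s, hs,
        Walk.append (Walk.of_snoc hw1 harc) hw2⟩
      have h1 := cdist_le_R hS (pkA G S c)
      have h2 := cdist_le_R hS (pkB G S c)
      omega
  · -- B-side: just ascend
    have hxS : x ∉ S := hcb.not_mem' hS
    have hcol : ¬ col G S (some (br G S x)) := by
      rw [hcb.br_eq hS]; exact pkB_col hb hS hc hbn
    obtain ⟨s, hs, hwalk⟩ := walk_up_full hS hO hxS hcol ⟨c, hc, Or.inr ⟨hbn, hcb⟩⟩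
    exact ⟨cdist G S x, by have := cdist_le_R hS x; omega, s, hs, hwalk⟩

/-- Every branch root lies on a cycle. -/
theorem isBr_onCyc (hb : G.Bridgeless) (hS : CD G S R) {c : V} (hc : IsBr G S c) :
    OnCyc G S c := by
  have spec := pk_spec hb hS hc
  rcases spec.2.2.2 with ⟨hbS, hac, _⟩ | ⟨hbn, _, hcase⟩
  · obtain ⟨j, hj, hancj⟩ := Anc.refl' hS spec.1
    exact ⟨c, hc, Or.inl ⟨j, hj, hancj.trans hac⟩⟩
  · rcases hcase with hcase | hcase
    · obtain ⟨j, hj, hancj⟩ := br_is_anc hS spec.1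
      exact ⟨c, hc, Or.inl ⟨j, hj, hancj.trans hcase.symm⟩⟩
    · obtain ⟨j, hj, hancj⟩ := br_is_anc hS hbn
      exact ⟨c, hc, Or.inr ⟨hbn, j, hj, hancj.trans hcase.symm⟩⟩

/-- After the phase, every vertex is within `R - 1` of the enlarged set. -/
theorem cd_drop (hb : G.Bridgeless) (hS : CD G S R) (hR : 1 ≤ R) :
    CD G (Sc G S) (R - 1) := by
  intro x
  by_cases hx : x ∈ Sc G S
  · exact ⟨0, by omega, x, hx, rfl⟩
  · have hxS : x ∉ S := fun h => hx (Or.inl h)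
    have h1 : 1 ≤ cdist G S x := cdist_pos hS hxS
    obtain ⟨m, hm⟩ : ∃ m, cdist G S x = m + 1 := ⟨cdist G S x - 1, by omega⟩
    obtain ⟨s, hs, hwalk⟩ := cdist_spec hS x
    rw [hm] at hwalk
    obtain ⟨w, hw1, hw2⟩ := Walk.snoc hwalk
    have hwS : w ∉ S := by
      intro hmem
      have : cdist G S x ≤ m := cdist_le ⟨w, hmem, hw1⟩
      omega
    have hcw : cdist G S w = 1 := cdist_eq_one_of_adj_S hS hwS hs hw2
    have hbrw : IsBr G S w := ⟨hwS, hcw⟩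
    have hwSc : w ∈ Sc G S := Or.inr (isBr_onCyc hb hS hbrw)
    refine ⟨m, ?_, w, hwSc, hw1⟩
    have := cdist_le_R hS x
    omega

end Walks

end CT

end Multigraph
namespace Multigraph

namespace CT

set_option linter.unusedSectionVars false
set_option linter.unusedVariables false

variable {V E : Type}

attribute [local instance] Classical.propDecidable

/-! ### Walks avoiding a set (except at the start) -/

/-- A walk all of whose vertices after the first avoid `T`. -/
def ReachOut (R' : V → V → Prop) (T : Set V) : ℕ → V → V → Prop
  | 0, u, v => u = v
  | n + 1, u, v => ∃ w, R' u w ∧ w ∉ T ∧ ReachOut R' T n w v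

namespace ReachOut

variable {R' R₂ : V → V → Prop} {T : Set V}

theorem toReachIn : ∀ {n : ℕ} {u v : V}, ReachOut R' T n u v → ReachIn R' n u v := by
  intro n
  induction n with
  | zero => intro u v h; exact h
  | succ k ih =>
    intro u v h
    obtain ⟨w, hw, _, h'⟩ := h
    exact ⟨w, hw, ih h'⟩

theorem transfer (hR : ∀ a b, R' a b → b ∉ T → R₂ a b) :
    ∀ {n : ℕ} {u v : V}, ReachOut R' T n u v → ReachOut R₂ T n u v := by
  intro n
  induction n with
  | zero => intro u v h; exact h
  | succ k ih =>
    intro u v h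
    obtain ⟨w, hw, hwT, h'⟩ := h
    exact ⟨w, hR _ _ hw hwT, hwT, ih h'⟩

end ReachOut

theorem walk_rev {R' : V → V → Prop} :
    ∀ {n : ℕ} {u v : V}, ReachIn R' n u v → ReachIn (fun a b => R' b a) n v u := by
  intro n
  induction n with
  | zero => intro u v h; exact h.symm
  | succ k ih =>
    intro u v h
    obtain ⟨w, hw, h'⟩ := h
    simpa using Walk.append (ih h') (Walk.single (R := fun a b => R' b a) hw)

theorem reachOut_split {R' : V → V → Prop} {T : Set V} :
    ∀ {n : ℕ} {w x : V}, ReachIn R' n w x → x ∉ T →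
      ReachOut R' T n w x ∨ ∃ m, m < n ∧ ∃ z ∈ T, ReachIn R' m z x := by
  intro n
  induction n with
  | zero => intro w x h hx; exact Or.inl h
  | succ k ih =>
    intro w x h hx
    obtain ⟨w₁, hw₁, h'⟩ := h
    by_cases hT : w₁ ∈ T
    · exact Or.inr ⟨k, by omega, w₁, hT, h'⟩
    · rcases ih h' hx with hout | ⟨m, hm, z, hz, hwz⟩
      · exact Or.inl ⟨w₁, hw₁, hT, hout⟩
      · exact Or.inr ⟨m, by omega, z, hz, hwz⟩

theorem reachOut_cut {R' : V → V → Prop} {T : Set V} :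
    ∀ (n : ℕ) {z x : V}, z ∈ T → ReachIn R' n z x → x ∉ T →
      ∃ m ≤ n, ∃ z₂ ∈ T, ReachOut R' T m z₂ x := by
  intro n
  induction n using Nat.strong_induction_on with
  | _ n ihs =>
    intro z x hz h hx
    rcases reachOut_split h hx with hout | ⟨m, hm, z₂, hz₂, hwz⟩
    · exact ⟨n, le_rfl, z, hz, hout⟩
    · obtain ⟨m', hm', z₃, hz₃, hout⟩ := ihs m hm hz₂ hwz hx
      exact ⟨m', by omega, z₃, hz₃, hout⟩

/-! ### The main induction -/

theorem pow_succ_bound (ρ : ℕ) : (ρ + 1) ^ 2 + (ρ + 1) = (ρ ^ 2 + ρ) + 2 * (ρ + 1) := by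
  ring

theorem main (G : Multigraph V E) (hb : G.Bridgeless) (ρ : ℕ) :
    ∀ S : Set V, S.Nonempty → CD G S ρ →
      ∃ O : G.Orientation, ∀ x,
        (∃ n ≤ ρ ^ 2 + ρ, ∃ s ∈ S, ReachIn O.DAdj n s x) ∧
        (∃ n ≤ ρ ^ 2 + ρ, ∃ s ∈ S, ReachIn O.DAdj n x s) := by
  induction ρ with
  | zero =>
    intro S hSne hcd
    refine ⟨⟨fun e => Quot.out (G.ends e), fun e => Quot.out_eq _⟩, fun x => ?_⟩
    obtain ⟨n, hn, s, hs, hw⟩ := hcd x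
    interval_cases n
    cases hw
    exact ⟨⟨0, by omega, x, hs, rfl⟩, ⟨0, by omega, x, hs, rfl⟩⟩
  | succ ρ ih =>
    intro S hSne hcd
    by_cases hall : ∀ x, x ∈ S
    · obtain ⟨O, hO⟩ := ih S hSne (fun x => ⟨0, by omega, x, hall x, rfl⟩)
      refine ⟨O, fun x => ?_⟩
      obtain ⟨⟨n₁, hn₁, s₁, hs₁, h₁⟩, ⟨n₂, hn₂, s₂, hs₂, h₂⟩⟩ := hO x
      have hbd := pow_succ_bound ρ
      exact ⟨⟨n₁, by omega, s₁, hs₁, h₁⟩, ⟨n₂, by omega, s₂, hs₂, h₂⟩⟩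
    · push_neg at hall
      obtain ⟨x₀, hx₀⟩ := hall
      haveI : Nonempty V := ⟨x₀⟩
      haveI : Nonempty E := by
        obtain ⟨n, hn, s, hs, hwalk⟩ := hcd x₀
        cases n with
        | zero => cases hwalk; exact absurd hs hx₀
        | succ k =>
          obtain ⟨w, ⟨e, _⟩, _⟩ := hwalk
          exact ⟨e⟩
      have hS' : CD G S (ρ + 1) := hcd
      have hdrop : CD G (Sc G S) ρ := by
        have := cd_drop hb hS' (by omega)
        simpa using this
      obtain ⟨O', hO'⟩ := ih (Sc G S) (hSne.mono subset_Sc) hdrop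
      set O := orient hb hS' O' with hOdef
      have hO : HO G S O := fun f a b h => orient_dir_req h
      have hbd := pow_succ_bound ρ
      refine ⟨O, fun x => ⟨?_, ?_⟩⟩
      · -- outward walks
        by_cases hx1 : x ∈ S
        · exact ⟨0, by omega, x, hx1, rfl⟩
        by_cases hx2 : OnCyc G S x
        · obtain ⟨n, hn, s, hs, hw⟩ := phase_out hb hS' hO hx2
          exact ⟨n, by omega, s, hs, hw⟩
        · have hxT : x ∉ Sc G S := fun h => h.elim hx1 hx2
          obtain ⟨⟨n, hn, z', hz', hw⟩, -⟩ := hO' x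
          obtain ⟨m, hm, z₂, hz₂, hro⟩ := reachOut_cut n hz' hw hxT
          have hro2 : ReachOut O.DAdj (Sc G S) m z₂ x :=
            hro.transfer (fun a b hab hbT =>
              orient_dAdj_outside (hb := hb) (hS := hS') (O' := O') (Or.inr hbT) hab)
          have hreach : ReachIn O.DAdj m z₂ x := hro2.toReachIn
          rcases hz₂ with hz₂ | hz₂
          · exact ⟨m, by omega, z₂, hz₂, hreach⟩
          · obtain ⟨n₂, hn₂, s, hs, hw₂⟩ := phase_out hb hS' hO hz₂
            exact ⟨n₂ + m, by omega, s, hs, Walk.append hw₂ hreach⟩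
      · -- inward walks
        by_cases hx1 : x ∈ S
        · exact ⟨0, by omega, x, hx1, rfl⟩
        by_cases hx2 : OnCyc G S x
        · obtain ⟨n, hn, s, hs, hw⟩ := phase_in hb hS' hO hx2
          exact ⟨n, by omega, s, hs, hw⟩
        · have hxT : x ∉ Sc G S := fun h => h.elim hx1 hx2
          obtain ⟨-, ⟨n, hn, z', hz', hw⟩⟩ := hO' x
          have hwrev : ReachIn (fun a b => O'.DAdj b a) n z' x := walk_rev hw
          obtain ⟨m, hm, z₂, hz₂, hro⟩ := reachOut_cut n hz' hwrev hxT
          have hro2 : ReachOut (fun a b => O.DAdj b a) (Sc G S) m z₂ x :=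
            hro.transfer (fun a b hab hbT =>
              orient_dAdj_outside (hb := hb) (hS := hS') (O' := O') (Or.inl hbT) hab)
          have hreach : ReachIn O.DAdj m x z₂ := walk_rev hro2.toReachIn
          rcases hz₂ with hz₂ | hz₂
          · exact ⟨m, by omega, z₂, hz₂, hreach⟩
          · obtain ⟨n₂, hn₂, s, hs, hw₂⟩ := phase_in hb hS' hO hz₂
            exact ⟨m + n₂, by omega, s, hs, Walk.append hreach hw₂⟩

end CT

end Multigraph

/-- Chvátal–Thomassen: for every positive integer `d`, every bridgeless graph
with diameter `d` has oriented diameter at most `2d² + 2d`. -/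
theorem orientedDiam_le_of_diam (d : ℕ) (hd : 0 < d)
    {V E : Type} [Fintype V] [Fintype E] (G : Multigraph V E)
    (hb : G.Bridgeless) (hdiam : G.diamIs d) :
    G.orientedDiamLE (2 * d ^ 2 + 2 * d) := by
  classical
  obtain ⟨u, v₀, -⟩ := hdiam.2.2
  have hconn := hdiam.1
  have hcd : Multigraph.CT.CD G {u} d := by
    intro x
    have hne : {n | Multigraph.ReachIn G.Adj n x u}.Nonempty := hconn x u
    have hmem : Multigraph.ReachIn G.Adj (G.dist x u) x u := Nat.sInf_mem hne
    exact ⟨G.dist x u, hdiam.2.1 x u, u, rfl, hmem⟩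
  obtain ⟨O, hO⟩ := Multigraph.CT.main G hb d {u} ⟨u, rfl⟩ hcd
  have key : ∀ x y, ∃ n ≤ 2 * d ^ 2 + 2 * d, Multigraph.ReachIn O.DAdj n x y := by
    intro x y
    obtain ⟨-, ⟨n₂, hn₂, s₂, hs₂, h₂⟩⟩ := hO x
    obtain ⟨⟨n₁, hn₁, s₁, hs₁, h₁⟩, -⟩ := hO y
    have e₁ : s₁ = u := hs₁
    have e₂ : s₂ = u := hs₂
    rw [e₁] at h₁
    rw [e₂] at h₂
    exact ⟨n₂ + n₁, by omega, Multigraph.CT.Walk.append h₂ h₁⟩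
  refine ⟨O, fun x y => ?_, fun x y => ?_⟩
  · obtain ⟨n, -, hw⟩ := key x y
    exact ⟨n, hw⟩
  · obtain ⟨n, hn, hw⟩ := key x y
    exact le_trans (Multigraph.CT.rdist_le hw) hn
end

section
/- Let G be a graph and let R, S be two disjoint vertex subsets of G such that the induced subgraph G[S] has no isolated vertex and every w ∈ S has a neighbour in R. Let F be a spanning forest of G[S] without isolated vertices, with bipartition classes V₁ and V₂, and consider any partial orientation of G in which all edges between R and V₁ are oriented from R to V₁, all edges of F between V₁ and V₂ are oriented from V₁ to V₂, and all edges between V₂ and R are oriented from V₂ to R (an R–S orientation). Then for every w ∈ S there is a directed path of length at most 2 from w to some vertex of R and a directed path of length at most 2 from some vertex of R to w (i.e. θ(w,R) ≤ 2). -/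
open Multigraph in
/-- The `R`-`S` orientation lemma: with `R, S` disjoint, `G[S]` having no
isolated vertex, every vertex of `S` having a neighbour in `R`, `F` a spanning
forest of `G[S]` without isolated vertices with bipartition `V₁, V₂`, and a
partial orientation `o` directing `[R,V₁]` as `R → V₁`, the `F`-edges as
`V₁ → V₂`, and `[V₂,R]` as `V₂ → R`, every `w ∈ S` has a directed path of
length at most `2` to some vertex of `R` and from some vertex of `R`,
i.e. `θ(w, R) ≤ 2`. -/
theorem RS_orientation_theta_le_two
    {V E : Type} [Fintype V] [Fintype E] (G : Multigraph V E)
    (R S V₁ V₂ : Set V) (F : Set E)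
    (hRS : Disjoint R S)
    -- `G[S]` has no isolated vertex
    (hSnoiso : ∀ w ∈ S, ∃ x ∈ S, G.Adj w x)
    -- every vertex of `S` has a neighbour in `R`
    (hRnbr : ∀ w ∈ S, ∃ r ∈ R, G.Adj w r)
    -- `F` is a set of edges of `G[S]`
    (hFS : ∀ e ∈ F, ∀ x y, G.ends e = s(x, y) → x ∈ S ∧ y ∈ S)
    -- `F` is spanning without isolated vertices: every vertex of `S` is an
    -- endpoint of an edge of `F`
    (hFspan : ∀ w ∈ S, ∃ e ∈ F, w ∈ G.ends e)
    -- `F` is a forest: every edge of `F` is a bridge of `F`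
    (hFforest : ∀ e ∈ F, ∀ a b, G.ends e = s(a, b) →
      ¬ ∃ n, ReachIn (fun x y => ∃ e' ∈ F, e' ≠ e ∧ G.ends e' = s(x, y)) n a b)
    -- `V₁, V₂` is a bipartition of `F` with `V₁ ∪ V₂ = S`
    (hV : V₁ ∪ V₂ = S) (hV12 : Disjoint V₁ V₂)
    (hFbip : ∀ e ∈ F, ∃ a ∈ V₁, ∃ b ∈ V₂, G.ends e = s(a, b))
    -- `o` is a partial orientation of `G`
    (o : E → Option (V × V))
    (hcompat : ∀ e a b, o e = some (a, b) → G.ends e = s(a, b))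
    -- in which `R → V₁ → V₂ → R` (along `F`-edges between `V₁` and `V₂`)
    (hRV₁ : ∀ e r w, r ∈ R → w ∈ V₁ → G.ends e = s(r, w) → o e = some (r, w))
    (hV₁V₂ : ∀ e ∈ F, ∀ a b, a ∈ V₁ → b ∈ V₂ → G.ends e = s(a, b) →
      o e = some (a, b))
    (hV₂R : ∀ e w r, w ∈ V₂ → r ∈ R → G.ends e = s(w, r) → o e = some (w, r)) :
    ∀ w ∈ S,
      (∃ n ≤ 2, ∃ r ∈ R, ReachIn (fun x y => ∃ e, o e = some (x, y)) n w r) ∧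
      (∃ n ≤ 2, ∃ r ∈ R, ReachIn (fun x y => ∃ e, o e = some (x, y)) n r w) := by
  intro w hwS
  have hw' : w ∈ V₁ ∨ w ∈ V₂ := by rw [← hV] at hwS; exact hwS
  have hwS' : w ∈ S := hwS
  obtain ⟨e, heF, hwe⟩ := hFspan w hwS'
  obtain ⟨a, ha1, b, hb2, hab⟩ := hFbip e heF
  have hoe : o e = some (a, b) := hV₁V₂ e heF a b ha1 hb2 hab
  have haS : a ∈ S := by rw [← hV]; exact Or.inl ha1
  have hbS : b ∈ S := by rw [← hV]; exact Or.inr hb2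
  rcases hw' with h1 | h2
  · -- w ∈ V₁
    have hwa : w = a := by
      rw [hab] at hwe
      rcases Sym2.mem_iff.mp hwe with h | h
      · exact h
      · exact absurd hb2 (by rw [← h]; exact Set.disjoint_left.mp hV12 h1)
    constructor
    · -- to R in 2 steps: w → b → r
      obtain ⟨r, hr, e2, he2⟩ := hRnbr b hbS
      have ho2 : o e2 = some (b, r) := hV₂R e2 b r hb2 hr he2
      exact ⟨2, le_refl 2, r, hr, b, ⟨e, by rw [hwa]; exact hoe⟩, r, ⟨e2, ho2⟩, rfl⟩
    · -- from R in 1 step: r → w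
      obtain ⟨r, hr, e1, he1⟩ := hRnbr w hwS'
      have ho1 : o e1 = some (r, w) :=
        hRV₁ e1 r w hr h1 (by rw [he1, Sym2.eq_swap])
      exact ⟨1, by norm_num, r, hr, w, ⟨e1, ho1⟩, rfl⟩
  · -- w ∈ V₂
    have hwb : w = b := by
      rw [hab] at hwe
      rcases Sym2.mem_iff.mp hwe with h | h
      · exact absurd ha1 (by rw [← h]; exact Set.disjoint_left.mp hV12.symm h2)
      · exact h
    constructor
    · -- to R in 1 step: w → r
      obtain ⟨r, hr, e1, he1⟩ := hRnbr w hwS'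
      have ho1 : o e1 = some (w, r) := hV₂R e1 w r h2 hr he1
      exact ⟨1, by norm_num, r, hr, r, ⟨e1, ho1⟩, rfl⟩
    · -- from R in 2 steps: r → a → w
      obtain ⟨r, hr, e1, he1⟩ := hRnbr a haS
      have ho1 : o e1 = some (r, a) :=
        hRV₁ e1 r a hr ha1 (by rw [he1, Sym2.eq_swap])
      exact ⟨2, le_refl 2, r, hr, a, ⟨e1, ho1⟩, w, ⟨e, by rw [hwb]; exact hoe⟩, rfl⟩
end

section
/- Under the setup, let w ∈ S_{4,4}. If N(w) ∩ S_{3,3} = ∅, then N(w) ∩ K ≠ ∅ and N(w) ∩ L ≠ ∅. Moreover, if w ∈ M' (i.e. there is exactly one edge between w and S_{3,3} ∪ K ∪ L), then there is exactly one edge between w and S_{3,3}, and N(w) ∩ (K ∪ L) = ∅. -/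
namespace Multigraph

variable {V E : Type} (G : Multigraph V E) (u v : V)

/-- The neighbourhood `N(w)` of a vertex `w`. -/
def nbhd (w : V) : Set V := {x | G.Adj w x}

/-- `[w, T]`: the set of edges between the vertex `w` and the set `T`. -/
def edgesTo (w : V) (T : Set V) : Set E := {e | ∃ x ∈ T, G.ends e = s(w, x)}

/-- `S_{i,j}`: the vertices at distance `i` from `u` and distance `j` from `v`. -/
noncomputable def Sij (i j : ℕ) : Set V := {w | G.dist w u = i ∧ G.dist w v = j}

/-- `A' = {w ∈ S_{1,2} : N(w) ⊆ S_{1,2} ∪ {u}}`. -/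
noncomputable def setA' : Set V :=
  {w ∈ Sij G u v 1 2 | G.nbhd w ⊆ Sij G u v 1 2 ∪ {u}}

/-- `A = S_{1,2} − A'`. -/
noncomputable def setA : Set V := Sij G u v 1 2 \ setA' G u v

/-- `B' = {w ∈ S_{2,1} : N(w) ⊆ S_{2,1} ∪ {v}}`. -/
noncomputable def setB' : Set V :=
  {w ∈ Sij G u v 2 1 | G.nbhd w ⊆ Sij G u v 2 1 ∪ {v}}

/-- `B = S_{2,1} − B'`. -/
noncomputable def setB : Set V := Sij G u v 2 1 \ setB' G u v

/-- `I' = {w ∈ S_{2,3} : N(w) ⊆ S_{2,3} ∪ A}`. -/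
noncomputable def setI' : Set V :=
  {w ∈ Sij G u v 2 3 | G.nbhd w ⊆ Sij G u v 2 3 ∪ setA G u v}

/-- `I = S_{2,3} − I'`. -/
noncomputable def setI : Set V := Sij G u v 2 3 \ setI' G u v

/-- `J' = {w ∈ S_{3,2} : N(w) ⊆ S_{3,2} ∪ B}`. -/
noncomputable def setJ' : Set V :=
  {w ∈ Sij G u v 3 2 | G.nbhd w ⊆ Sij G u v 3 2 ∪ setB G u v}

/-- `J = S_{3,2} − J'`. -/
noncomputable def setJ : Set V := Sij G u v 3 2 \ setJ' G u v

/-- `K' = {w ∈ S_{3,4} : N(w) ⊆ S_{3,4} ∪ I}`. -/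
noncomputable def setK' : Set V :=
  {w ∈ Sij G u v 3 4 | G.nbhd w ⊆ Sij G u v 3 4 ∪ setI G u v}

/-- `K = S_{3,4} − K'`. -/
noncomputable def setK : Set V := Sij G u v 3 4 \ setK' G u v

/-- `L' = {w ∈ S_{4,3} : N(w) ⊆ S_{4,3} ∪ J}`. -/
noncomputable def setL' : Set V :=
  {w ∈ Sij G u v 4 3 | G.nbhd w ⊆ Sij G u v 4 3 ∪ setJ G u v}

/-- `L = S_{4,3} − L'`. -/
noncomputable def setL : Set V := Sij G u v 4 3 \ setL' G u v

/-- `M' = {w ∈ S_{4,4} : |[w, S_{3,3} ∪ K ∪ L]| = 1}`. -/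
noncomputable def setM' : Set V :=
  {w ∈ Sij G u v 4 4 |
    (G.edgesTo w (Sij G u v 3 3 ∪ setK G u v ∪ setL G u v)).ncard = 1}

/-- `M = S_{4,4} − M'`. -/
noncomputable def setM : Set V := Sij G u v 4 4 \ setM' G u v

/-- `X' = {w ∈ S_{3,3} : |[w, S_{2,2} ∪ I ∪ J ∪ K ∪ L]| = 1}`. -/
noncomputable def setX' : Set V :=
  {w ∈ Sij G u v 3 3 |
    (G.edgesTo w (Sij G u v 2 2 ∪ setI G u v ∪ setJ G u v ∪ setK G u v ∪
      setL G u v)).ncard = 1}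

/-- `X = S_{3,3} − X'`. -/
noncomputable def setX : Set V := Sij G u v 3 3 \ setX' G u v

end Multigraph


namespace Multigraph

variable {V E : Type}

lemma ReachIn.append {R : V → V → Prop} :
    ∀ {m n : ℕ} {a b c : V}, ReachIn R m a b → ReachIn R n b c →
      ReachIn R (m + n) a c := by
  intro m
  induction m with
  | zero => intro n a b c h1 h2; cases h1; simpa using h2
  | succ k ih =>
      intro n a b c h1 h2
      obtain ⟨x, hx, hr⟩ := h1
      have hadd : k + 1 + n = (k + n) + 1 := by omega
      rw [hadd]
      exact ⟨x, hx, ih hr h2⟩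

lemma adj_symm (G : Multigraph V E) {a b : V} (h : G.Adj a b) : G.Adj b a := by
  obtain ⟨e, he⟩ := h
  exact ⟨e, he.trans (Sym2.eq_swap)⟩

lemma dist_le_of_reach (G : Multigraph V E) {a b : V} {n : ℕ}
    (h : ReachIn G.Adj n a b) : G.dist a b ≤ n := Nat.sInf_le h

lemma reach_dist (G : Multigraph V E) (hc : G.Connected) (a b : V) :
    ReachIn G.Adj (G.dist a b) a b := Nat.sInf_mem (hc a b)

lemma dist_triangle (G : Multigraph V E) (hc : G.Connected) (a b c : V) :
    G.dist a c ≤ G.dist a b + G.dist b c :=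
  G.dist_le_of_reach ((G.reach_dist hc a b).append (G.reach_dist hc b c))

lemma dist_adj_le (G : Multigraph V E) {a b : V} (h : G.Adj a b) :
    G.dist a b ≤ 1 :=
  G.dist_le_of_reach (n := 1) ⟨b, h, rfl⟩

lemma mem_Sij (G : Multigraph V E) {u v : V} {i j : ℕ} {x : V} :
    x ∈ Sij G u v i j ↔ G.dist x u = i ∧ G.dist x v = j := Iff.rfl

end Multigraph

open Multigraph in
/-- Proposition 2.1(i): for `w ∈ S_{4,4}`, if `N(w) ∩ S_{3,3} = ∅` then
`N(w) ∩ K ≠ ∅` and `N(w) ∩ L ≠ ∅`; and if `w ∈ M'` then `|[w, S_{3,3}]| = 1`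
and `N(w) ∩ (K ∪ L) = ∅`. -/
theorem S44_neighbour_structure
    {V E : Type} [Fintype V] [Fintype E] (G : Multigraph V E)
    (u v : V) (e₀ : E) (gs : ℕ)
    (hb : G.Bridgeless) (hd : G.diamIs 4)
    (hgs : gs = 4 ∨ gs = 5) (hgirth : G.edgeGirth = gs)
    (he : G.ends e₀ = s(u, v)) (hcyc : G.cycLen e₀ = gs)
    (w : V) (hw : w ∈ Sij G u v 4 4) :
    ((G.nbhd w ∩ Sij G u v 3 3 = ∅ →
        (G.nbhd w ∩ setK G u v).Nonempty ∧ (G.nbhd w ∩ setL G u v).Nonempty) ∧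
      (w ∈ setM' G u v →
        (G.edgesTo w (Sij G u v 3 3)).ncard = 1 ∧
          G.nbhd w ∩ (setK G u v ∪ setL G u v) = ∅)) := by
  obtain ⟨hwu, hwv⟩ := (mem_Sij G).mp hw
  have hc : G.Connected := hd.1
  have hdiam := hd.2.1
  have part1 : G.nbhd w ∩ Sij G u v 3 3 = ∅ →
      (G.nbhd w ∩ setK G u v).Nonempty ∧ (G.nbhd w ∩ setL G u v).Nonempty := by
    intro hempty
    have hnot : ∀ x, G.Adj w x → ¬ (G.dist x u = 3 ∧ G.dist x v = 3) := by
      intro x hx hx33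
      have hmem : x ∈ G.nbhd w ∩ Sij G u v 3 3 := ⟨hx, (mem_Sij G).mpr hx33⟩
      rw [hempty] at hmem
      exact hmem
    constructor
    · have hr : ReachIn G.Adj 4 w u := by
        rw [← hwu]; exact G.reach_dist hc w u
      obtain ⟨x, hx, hr3⟩ := hr
      have h1 : G.dist x u ≤ 3 := G.dist_le_of_reach hr3
      have ht1 := G.dist_triangle hc w x u
      have ht2 := G.dist_adj_le hx
      have h2 : G.dist x u = 3 := by omega
      have ht3 := G.dist_triangle hc w x v
      have ht4 := hdiam x v
      have ht5 := hnot x hx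
      have h3 : G.dist x v = 4 := by omega
      refine ⟨x, hx, ⟨(mem_Sij G).mpr ⟨h2, h3⟩, ?_⟩⟩
      rintro ⟨-, hsub⟩
      have hwmem : w ∈ Sij G u v 3 4 ∪ setI G u v := hsub (G.adj_symm hx)
      rcases hwmem with h | h
      · have := ((mem_Sij G).mp h).1; omega
      · have := ((mem_Sij G).mp h.1).1; omega
    · have hr : ReachIn G.Adj 4 w v := by
        rw [← hwv]; exact G.reach_dist hc w v
      obtain ⟨y, hy, hr3⟩ := hr
      have h1 : G.dist y v ≤ 3 := G.dist_le_of_reach hr3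
      have ht1 := G.dist_triangle hc w y v
      have ht2 := G.dist_adj_le hy
      have h2 : G.dist y v = 3 := by omega
      have ht3 := G.dist_triangle hc w y u
      have ht4 := hdiam y u
      have ht5 := hnot y hy
      have h3 : G.dist y u = 4 := by omega
      refine ⟨y, hy, ⟨(mem_Sij G).mpr ⟨h3, h2⟩, ?_⟩⟩
      rintro ⟨-, hsub⟩
      have hwmem : w ∈ Sij G u v 4 3 ∪ setJ G u v := hsub (G.adj_symm hy)
      rcases hwmem with h | h
      · have := ((mem_Sij G).mp h).2; omega
      · have := ((mem_Sij G).mp h.1).2; omega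
  refine ⟨part1, ?_⟩
  intro hM
  obtain ⟨-, hcard⟩ := hM
  have hfin : (G.edgesTo w (Sij G u v 3 3 ∪ setK G u v ∪ setL G u v)).Finite :=
    Set.toFinite _
  have hne : (G.nbhd w ∩ Sij G u v 3 3).Nonempty := by
    by_contra hcon
    rw [Set.not_nonempty_iff_eq_empty] at hcon
    obtain ⟨⟨x, hxadj, hxK⟩, ⟨y, hyadj, hyL⟩⟩ := part1 hcon
    obtain ⟨e1, he1⟩ := hxadj
    obtain ⟨e2, he2⟩ := hyadj
    have hxy : x ≠ y := by
      intro h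
      have h1 : G.dist x u = 3 := ((mem_Sij G).mp hxK.1).1
      have h2 : G.dist y u = 4 := ((mem_Sij G).mp hyL.1).1
      rw [h] at h1; omega
    have he12 : e1 ≠ e2 := by
      intro h
      rw [h] at he1
      exact hxy (Sym2.congr_right.mp (he1.symm.trans he2))
    have hsub2 : ({e1, e2} : Set E) ⊆
        G.edgesTo w (Sij G u v 3 3 ∪ setK G u v ∪ setL G u v) := by
      intro e hemem
      simp only [Set.mem_insert_iff, Set.mem_singleton_iff] at hemem
      rcases hemem with rfl | rfl
      · exact ⟨x, Or.inl (Or.inr hxK), he1⟩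
      · exact ⟨y, Or.inr hyL, he2⟩
    have h2le : 2 ≤ (G.edgesTo w
        (Sij G u v 3 3 ∪ setK G u v ∪ setL G u v)).ncard := by
      rw [← Set.ncard_pair he12]
      exact Set.ncard_le_ncard hsub2 hfin
    omega
  obtain ⟨z, hzadj, hz33⟩ := hne
  obtain ⟨ez, hez⟩ := hzadj
  obtain ⟨e', he'⟩ := Set.ncard_eq_one.mp hcard
  have hez_mem : ez ∈ G.edgesTo w (Sij G u v 3 3 ∪ setK G u v ∪ setL G u v) :=
    ⟨z, Or.inl (Or.inl hz33), hez⟩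
  rw [he', Set.mem_singleton_iff] at hez_mem
  constructor
  · have heq : G.edgesTo w (Sij G u v 3 3) = {e'} := by
      apply Set.eq_singleton_iff_unique_mem.mpr
      constructor
      · rw [← hez_mem]
        exact ⟨z, hz33, hez⟩
      · intro e hemem
        have hmem2 : e ∈ G.edgesTo w
            (Sij G u v 3 3 ∪ setK G u v ∪ setL G u v) := by
          obtain ⟨a, ha, hae⟩ := hemem
          exact ⟨a, Or.inl (Or.inl ha), hae⟩
        rw [he', Set.mem_singleton_iff] at hmem2
        exact hmem2
    rw [heq, Set.ncard_singleton]
  · ext x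
    simp only [Set.mem_inter_iff, Set.mem_empty_iff_false, iff_false, not_and]
    intro hxadj hxKL
    obtain ⟨ex, hex⟩ := hxadj
    have hmem : ex ∈ G.edgesTo w (Sij G u v 3 3 ∪ setK G u v ∪ setL G u v) := by
      rcases hxKL with h | h
      · exact ⟨x, Or.inl (Or.inr h), hex⟩
      · exact ⟨x, Or.inr h, hex⟩
    rw [he', Set.mem_singleton_iff] at hmem
    have hends : s(w, z) = s(w, x) := by
      rw [← hez, ← hex, hez_mem, hmem]
    have hxz : z = x := Sym2.congr_right.mp hends
    subst hxz
    rcases hxKL with h | h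
    · have h1 : G.dist z v = 4 := ((mem_Sij G).mp h.1).2
      have h2 : G.dist z v = 3 := ((mem_Sij G).mp hz33).2
      omega
    · have h1 : G.dist z u = 4 := ((mem_Sij G).mp h.1).1
      have h2 : G.dist z u = 3 := ((mem_Sij G).mp hz33).1
      omega
end

section
/- Every bridgeless graph G with diameter d(G)=4 and edge girth g*(G)=2 has oriented diameter at most 4, and this bound is attained: there exists a bridgeless graph with diameter 4 and edge girth 2 whose oriented diameter equals 4 (i.e. F(4,2)=4). -/
namespace MGAux

open Multigraph

variable {V E : Type}

lemma reachIn_mono {R S : V → V → Prop} (h : ∀ a b, R a b → S a b) :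
    ∀ n u v, ReachIn R n u v → ReachIn S n u v
  | 0, _, _, hr => hr
  | n+1, u, v, ⟨w, hw, hr⟩ => ⟨w, h _ _ hw, reachIn_mono h n w v hr⟩

lemma reachIn_dist_le {R : V → V → Prop} (f : V → ℕ)
    (h : ∀ a b, R a b → Nat.dist (f a) (f b) ≤ 1) :
    ∀ n u v, ReachIn R n u v → Nat.dist (f u) (f v) ≤ n
  | 0, _, _, hr => by subst hr; simp [Nat.dist_self]
  | n+1, u, v, ⟨w, hw, hr⟩ => by
      calc Nat.dist (f u) (f v) ≤ Nat.dist (f u) (f w) + Nat.dist (f w) (f v) :=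
            Nat.dist.triangle_inequality _ _ _
        _ ≤ 1 + n := Nat.add_le_add (h _ _ hw) (reachIn_dist_le f h n w v hr)
        _ = n + 1 := Nat.add_comm _ _

/-- Every edge has a parallel partner. -/
lemma exists_parallel (G : Multigraph V E) (hb : G.Bridgeless) (hg : G.edgeGirth = 2)
    (e : E) : ∃ e', e' ≠ e ∧ G.ends e' = G.ends e := by
  obtain ⟨⟨a, b⟩, hab⟩ := Quot.exists_rep (G.ends e)
  have hab : G.ends e = s(a, b) := hab.symm
  set S : Set ℕ := {n | ∃ a b, G.ends e = s(a, b) ∧ ReachIn (G.AdjOff e) n a b} with hS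
  have hne : S.Nonempty := by
    obtain ⟨n, hn⟩ := hb.2 e a b
    exact ⟨n, a, b, hab, hn⟩
  have hbdd : BddAbove (Set.range G.cycLen) := by
    by_contra h
    rw [Multigraph.edgeGirth, csSup_of_not_bddAbove h, csSup_empty] at hg
    simp at hg
  have hle : G.cycLen e ≤ 2 := by
    rw [← hg]; exact le_csSup hbdd ⟨e, rfl⟩
  have hinf : sInf S ≤ 1 := by
    have : sInf S + 1 ≤ 2 := hle
    omega
  have hmem : sInf S ∈ S := Nat.sInf_mem hne
  have h0 : sInf S ≠ 0 := by
    intro h0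
    rw [h0] at hmem
    obtain ⟨x, y, hxy, hr⟩ := hmem
    have : x = y := hr
    subst this
    exact G.loopless e (by rw [hxy]; exact Sym2.mk_isDiag_iff.mpr rfl)
  have h1 : sInf S = 1 := by omega
  rw [h1] at hmem
  obtain ⟨x, y, hxy, w, ⟨e', he'ne, he'⟩, hw⟩ := hmem
  have hw : w = y := hw
  subst hw
  exact ⟨e', he'ne, by rw [he', hxy]⟩


def G0 : Multigraph (Fin 5) (Fin 4 × Bool) where
  ends e := s(e.1.castSucc, e.1.succ)
  loopless e := by rw [Sym2.mk_isDiag_iff]; exact (Fin.castSucc_lt_succ : e.1.castSucc < e.1.succ).ne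

lemma fin5_reach {R : Fin 5 → Fin 5 → Prop}
    (h : ∀ i : Fin 4, R i.castSucc i.succ ∧ R i.succ i.castSucc) :
    ∀ (k : ℕ) (u v : Fin 5), Nat.dist u.val v.val = k → ReachIn R k u v := by
  intro k
  induction k with
  | zero =>
    intro u v h0
    exact Fin.ext (by simp [Nat.dist] at h0; omega)
  | succ k ih =>
    intro u v hk
    rcases lt_or_ge u.val v.val with hlt | hge
    · have hu4 : u.val < 4 := by have := v.isLt; omega
      refine ⟨(⟨u.val, hu4⟩ : Fin 4).succ, ?_, ih _ _ ?_⟩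
      · have he : (⟨u.val, hu4⟩ : Fin 4).castSucc = u := Fin.ext rfl
        have hr := (h ⟨u.val, hu4⟩).1
        rwa [he] at hr
      · simp only [Fin.val_succ] at *
        simp [Nat.dist] at *; omega
    · have hgt : v.val < u.val := by simp [Nat.dist] at hk; omega
      obtain ⟨i, hi⟩ : ∃ i : Fin 4, i.succ = u :=
        ⟨⟨u.val - 1, by omega⟩, Fin.ext (by simp [Fin.val_succ]; omega)⟩
      refine ⟨i.castSucc, hi ▸ (h i).2, ih _ _ ?_⟩
      have hu : i.val + 1 = u.val := by
        have := congrArg Fin.val hi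
        simpa [Fin.val_succ] using this
      simp only [Fin.coe_castSucc] at *
      simp [Nat.dist] at *; omega

lemma G0_pairs (i : Fin 4) : G0.Adj i.castSucc i.succ ∧ G0.Adj i.succ i.castSucc :=
  ⟨⟨(i, true), rfl⟩, ⟨(i, true), Sym2.eq_swap⟩⟩

lemma G0_pairs_off (e₀ : Fin 4 × Bool) (i : Fin 4) :
    G0.AdjOff e₀ i.castSucc i.succ ∧ G0.AdjOff e₀ i.succ i.castSucc := by
  by_cases h : (i, true) = e₀
  · have hne : (i, false) ≠ e₀ := by rw [← h]; simp
    exact ⟨⟨(i, false), hne, rfl⟩, ⟨(i, false), hne, Sym2.eq_swap⟩⟩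
  · exact ⟨⟨(i, true), h, rfl⟩, ⟨(i, true), h, Sym2.eq_swap⟩⟩

lemma G0_step : ∀ a b : Fin 5, G0.Adj a b → Nat.dist a.val b.val ≤ 1 := by
  rintro a b ⟨e, he⟩
  have h : s((e.1.castSucc : Fin 5), e.1.succ) = s(a, b) := he
  rcases Sym2.eq_iff.mp h with ⟨h1, h2⟩ | ⟨h1, h2⟩ <;> subst h1 <;> subst h2 <;>
    simp [Nat.dist, Fin.val_succ]

lemma G0_conn : G0.Connected := fun u v => ⟨_, fin5_reach G0_pairs _ u v rfl⟩

lemma G0_bridgeless : G0.Bridgeless :=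
  ⟨G0_conn, fun e u v => ⟨_, fin5_reach (G0_pairs_off e) _ u v rfl⟩⟩

lemma G0_dist04 : ∀ n, ReachIn G0.Adj n (0 : Fin 5) (4 : Fin 5) → 4 ≤ n := by
  intro n hn
  have := reachIn_dist_le Fin.val G0_step n 0 4 hn
  have h04 : Nat.dist ((0 : Fin 5)).val ((4 : Fin 5)).val = 4 := by decide
  omega

lemma G0_diam : G0.diamIs 4 := by
  refine ⟨G0_conn, ?_, 0, 4, ?_⟩
  · intro u v
    have hm : Nat.dist u.val v.val ∈ {n | ReachIn G0.Adj n u v} :=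
      fin5_reach G0_pairs _ u v rfl
    have h4 : Nat.dist u.val v.val ≤ 4 := by
      have := u.isLt; have := v.isLt; simp [Nat.dist]; omega
    calc G0.dist u v ≤ Nat.dist u.val v.val := Nat.sInf_le hm
      _ ≤ 4 := h4
  · have hm : (4 : ℕ) ∈ {n | ReachIn G0.Adj n (0 : Fin 5) (4 : Fin 5)} := by
      have := fin5_reach G0_pairs (Nat.dist ((0:Fin 5)).val ((4:Fin 5)).val) 0 4 rfl
      have h04 : Nat.dist ((0 : Fin 5)).val ((4 : Fin 5)).val = 4 := by decide
      rwa [h04] at this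
    exact le_antisymm (Nat.sInf_le hm) (le_csInf ⟨4, hm⟩ fun n hn => G0_dist04 n hn)

lemma G0_cycLen (e : Fin 4 × Bool) : G0.cycLen e = 2 := by
  set S : Set ℕ := {n | ∃ a b, G0.ends e = s(a, b) ∧ ReachIn (G0.AdjOff e) n a b} with hS
  have h1 : (1 : ℕ) ∈ S := by
    refine ⟨e.1.castSucc, e.1.succ, rfl, e.1.succ, ⟨(e.1, !e.2), ?_, rfl⟩, rfl⟩
    intro h
    have h2 : (e.1, !e.2).2 = e.2 := congrArg Prod.snd h
    simp at h2
  have h0 : (0 : ℕ) ∉ S := by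
    rintro ⟨a, b, hab, hr⟩
    have hab' : a = b := hr
    subst hab'
    exact G0.loopless e (by rw [hab]; exact Sym2.mk_isDiag_iff.mpr rfl)
  have hle : sInf S ≤ 1 := Nat.sInf_le h1
  have hmem : sInf S ∈ S := Nat.sInf_mem ⟨1, h1⟩
  have hne0 : sInf S ≠ 0 := fun h => h0 (h ▸ hmem)
  show sInf S + 1 = 2
  omega

lemma G0_girth : G0.edgeGirth = 2 := by
  have hconst : G0.cycLen = fun _ => 2 := funext G0_cycLen
  rw [Multigraph.edgeGirth, hconst, Set.range_const, csSup_singleton]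

end MGAux

/-- `F(4,2) = 4`: every bridgeless graph with diameter `4` and edge girth `2`
has oriented diameter at most `4`, and some bridgeless graph with diameter `4`
and edge girth `2` has oriented diameter exactly `4`. -/
theorem F_four_two_eq_four :
    (∀ (V E : Type) [Fintype V] [Fintype E] (G : Multigraph V E),
      G.Bridgeless → G.diamIs 4 → G.edgeGirth = 2 → G.orientedDiamLE 4) ∧
    (∃ (V E : Type) (_ : Fintype V) (_ : Fintype E) (G : Multigraph V E),
      G.Bridgeless ∧ G.diamIs 4 ∧ G.edgeGirth = 2 ∧
      ∀ O : G.Orientation, O.Strong → ∃ x y, 4 ≤ O.ddist x y) := by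
  constructor
  · -- upper bound
    intro V E _ _ G hb hd hg
    classical
    open Multigraph MGAux in
    letI : LinearOrder V := LinearOrder.lift' (Fintype.equivFin V) (Fintype.equivFin V).injective
    -- ascending pair of a Sym2
    let asc : Sym2 V → V × V := Sym2.lift ⟨fun a b => (min a b, max a b), by
      intro a b; simp [min_comm, max_comm]⟩
    have hasc : ∀ p : Sym2 V, s((asc p).1, (asc p).2) = p := by
      intro p
      induction p using Sym2.ind with
      | _ a b =>
        show s(min a b, max a b) = s(a, b)
        rcases le_total a b with h | h
        · rw [min_eq_left h, max_eq_right h]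
        · rw [min_eq_right h, max_eq_left h, Sym2.eq_swap]
    -- representative of each parallel class
    have hex : ∀ e : E, ∃ e', G.ends e' = G.ends e := fun e => ⟨e, rfl⟩
    let rep : E → E := fun e => (hex e).choose
    have hrep_ends : ∀ e, G.ends (rep e) = G.ends e := fun e => (hex e).choose_spec
    have hrep_eq : ∀ e₁ e₂, G.ends e₁ = G.ends e₂ → rep e₁ = rep e₂ := by
      have key : ∀ (p q : Sym2 V) (hp : ∃ e', G.ends e' = p) (hq : ∃ e', G.ends e' = q),
          p = q → hp.choose = hq.choose := by
        rintro p q hp hq rfl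
        rfl
      intro e₁ e₂ h
      exact key _ _ (hex e₁) (hex e₂) h
    let O : G.Orientation :=
      { dir := fun e => if e = rep e then asc (G.ends e)
          else ((asc (G.ends e)).2, (asc (G.ends e)).1)
        compat := by
          intro e
          by_cases h : e = rep e
          · rw [if_pos h]; exact hasc _
          · rw [if_neg h, Sym2.eq_swap]; exact hasc _ }
    have hDAdj : ∀ u v, G.Adj u v → O.DAdj u v ∧ O.DAdj v u := by
      intro u v ⟨e, he⟩
      set p := G.ends e with hp
      have hrr : rep (rep e) = rep e := hrep_eq _ _ (hrep_ends e)
      have hdir_r : O.dir (rep e) = asc p := by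
        show (if rep e = rep (rep e) then _ else _) = _
        rw [if_pos hrr.symm, hrep_ends]
      obtain ⟨e', he'ne, he'ends⟩ := exists_parallel G hb hg e
      obtain ⟨x, hxends, hxne⟩ : ∃ x, G.ends x = p ∧ x ≠ rep x := by
        by_cases hxe : e = rep e
        · refine ⟨e', he'ends, ?_⟩
          rw [hrep_eq e' e he'ends, ← hxe]
          exact he'ne
        · exact ⟨e, rfl, hxe⟩
      have hdir_x : O.dir x = ((asc p).2, (asc p).1) := by
        show (if x = rep x then _ else _) = _
        rw [if_neg hxne, hxends]
      have h12 : O.DAdj (asc p).1 (asc p).2 := ⟨rep e, hdir_r⟩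
      have h21 : O.DAdj (asc p).2 (asc p).1 := ⟨x, hdir_x⟩
      have hpuv : s((asc p).1, (asc p).2) = s(u, v) := by rw [hasc p, ← he]
      rcases Sym2.eq_iff.mp hpuv with ⟨h1, h2⟩ | ⟨h1, h2⟩
      · rw [← h1, ← h2]; exact ⟨h12, h21⟩
      · rw [← h1, ← h2]; exact ⟨h21, h12⟩
    refine ⟨O, ?_, ?_⟩
    · intro u v
      obtain ⟨n, hn⟩ := hb.1 u v
      exact ⟨n, reachIn_mono (fun a b hab => (hDAdj a b hab).1) n u v hn⟩
    · intro u v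
      have hconn : {n | ReachIn G.Adj n u v}.Nonempty := hb.1 u v
      have hmem : G.dist u v ∈ {n | ReachIn G.Adj n u v} := Nat.sInf_mem hconn
      have hle4 : G.dist u v ≤ 4 := hd.2.1 u v
      have : ReachIn O.DAdj (G.dist u v) u v :=
        reachIn_mono (fun a b hab => (hDAdj a b hab).1) _ u v hmem
      calc O.ddist u v ≤ G.dist u v := Nat.sInf_le this
        _ ≤ 4 := hle4
  · -- the extremal example: path of four doubled edges
    open Multigraph MGAux in
    refine ⟨Fin 5, Fin 4 × Bool, inferInstance, inferInstance, MGAux.G0, ?_, ?_, ?_, ?_⟩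
    · exact G0_bridgeless
    · exact G0_diam
    · exact G0_girth
    · intro O hstrong
      refine ⟨0, 4, ?_⟩
      have hne : {n | ReachIn O.DAdj n (0 : Fin 5) (4 : Fin 5)}.Nonempty := hstrong 0 4
      refine le_csInf hne ?_
      intro n hn
      have hAdj : ∀ a b, O.DAdj a b → G0.Adj a b := by
        rintro a b ⟨e, he⟩
        exact ⟨e, by rw [← O.compat e, he]⟩
      exact G0_dist04 n (reachIn_mono hAdj n _ _ hn)
end
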